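/- arXiv:1905.04015 — 3 statements merged into one kernel-verified Lean document; each statement's English description precedes it below -/
import Mathlib

section
/- Let η, ψ be Schwartz functions on ℝⁿ and let k be a nonnegative integer such that ∫_{ℝⁿ} η(x) x^I dx = 0 for every multi-index I with |I| ≤ k. Then for every M ≥ 0 there is a constant C = C(η, ψ, k, M, n) such that for all t ≥ 1 and all x ∈ ℝⁿ, |(η * ψ_t)(x)| ≤ C t^{-(k+1)-n} (1 + t⁻¹|x|)^{-M}. -/
open MeasureTheory Metric SchwartzMap
open scoped ENNReal

noncomputable section

abbrev Eu (n : ℕ) := EuclideanSpace ℝ (Fin n)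

/-- Dilation: `φ_t(x) = t^{-n} φ(x/t)`. -/
def dil (n : ℕ) (φ : Eu n → ℂ) (t : ℝ) : Eu n → ℂ :=
  fun x => ((t ^ n : ℝ) : ℂ)⁻¹ * φ (t⁻¹ • x)

/-- Convolution on `ℝⁿ`. -/
def cnv (n : ℕ) (f g : Eu n → ℂ) : Eu n → ℂ :=
  fun x => ∫ y, f (x - y) * g y

/-- Peetre maximal function `F**_{N,R}`. -/
def peetre (n : ℕ) (F : Eu n → ℂ) (N R : ℝ) : Eu n → ℝ≥0∞ :=
  fun x => ⨆ y : Eu n, (‖F (x - y)‖₊ : ℝ≥0∞) / ENNReal.ofReal ((1 + R * ‖y‖) ^ N)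

/-- Hardy–Littlewood maximal operator of a (nonnegative) function. -/
def HL (n : ℕ) (g : Eu n → ℝ) : Eu n → ℝ≥0∞ :=
  fun x => ⨆ (z : Eu n) (ρ : ℝ) (_ : x ∈ ball z ρ),
    (volume (ball z ρ))⁻¹ * ∫⁻ y in ball z ρ, ENNReal.ofReal (g y)

/-- The quantity `C(η, ψ, t, L) = ∫ (1+|x|)^L |(η * ψ_t)(x)| dx`. -/
def Cq (n : ℕ) (η ψ : Eu n → ℂ) (t L : ℝ) : ℝ≥0∞ :=
  ∫⁻ x, ENNReal.ofReal ((1 + ‖x‖) ^ L) * (‖cnv n η (dil n ψ t) x‖₊ : ℝ≥0∞)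

/-- Partial derivative in the `k`-th coordinate direction. -/
def pd (n : ℕ) (k : Fin n) (g : Eu n → ℂ) : Eu n → ℂ :=
  fun x => fderiv ℝ g x (EuclideanSpace.single k 1)

/-- All moments `∫ g(x) x^I dx` with `|I| ≤ k` vanish. -/
def momZero (n k : ℕ) (g : Eu n → ℂ) : Prop :=
  ∀ I : Fin n → ℕ, (∑ i, I i) ≤ k → ∫ x, g x * ∏ i, ((x i : ℂ) ^ I i) = 0

/-- Continuous Calderón reproducing formula:
`Σ_ℓ ∫_ε^B (f * φ^{(ℓ)}_t * η^{(ℓ)}_t)(x) dt/t → f(x)` as `ε → 0+`, `B → ∞`. -/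
def Calderon (n M : ℕ) (φ η : Fin M → 𝓢(Eu n, ℂ)) : Prop :=
  ∀ (f : 𝓢(Eu n, ℂ)) (x : Eu n),
    Filter.Tendsto
      (fun p : ℝ × ℝ => ∑ ℓ : Fin M, ∫ t in Set.Ioc p.1 p.2,
        cnv n (cnv n ⇑f (dil n ⇑(φ ℓ) t)) (dil n ⇑(η ℓ) t) x / (t : ℂ))
      ((nhdsWithin 0 (Set.Ioi 0)) ×ˢ Filter.atTop) (nhds (f x))

/-- Discrete Calderón reproducing formula with parameter `b`:
`Σ_{j=-k}^m Σ_ℓ (f * φ^{(ℓ)}_{bʲ} * η^{(ℓ)}_{bʲ})(x) → f(x)` as `k, m → ∞`. -/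
def CalderonDisc (n M : ℕ) (b : ℝ) (φ η : Fin M → 𝓢(Eu n, ℂ)) : Prop :=
  ∀ (f : 𝓢(Eu n, ℂ)) (x : Eu n),
    Filter.Tendsto
      (fun p : ℕ × ℕ => ∑ j ∈ Finset.Icc (-(p.1 : ℤ)) (p.2 : ℤ), ∑ ℓ : Fin M,
        cnv n (cnv n ⇑f (dil n ⇑(φ ℓ) (b ^ j))) (dil n ⇑(η ℓ) (b ^ j)) x)
      Filter.atTop (nhds (f x))

/-- Muckenhoupt `A_s` condition for a weight `w`. -/
def MuckA (n : ℕ) (s : ℝ) (w : Eu n → ℝ) : Prop :=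
  ∃ A : ℝ, ∀ (z : Eu n) (ρ : ℝ), 0 < ρ →
    ((volume (ball z ρ)).toReal⁻¹ * ∫ y in ball z ρ, w y) *
      ((volume (ball z ρ)).toReal⁻¹ * ∫ y in ball z ρ, (w y) ^ (-(1 / (s - 1)))) ^ (s - 1) ≤ A

/-- Iterated coordinate partial derivatives along a list of directions. -/
def multiDeriv (n : ℕ) : List (Fin n) → (Eu n → ℂ) → Eu n → ℂ
  | [], g => g
  | i :: Is, g => fun x => fderiv ℝ (multiDeriv n Is g) x (EuclideanSpace.single i 1)


section Aux

variable {E F : Type*} [NormedAddCommGroup E] [NormedSpace ℝ E]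
  [NormedAddCommGroup F] [NormedSpace ℝ F]

lemma itfd_comp_const_add (f : E → F) (hf : ContDiff ℝ ((⊤:ℕ∞)) f) (a : E) (i : ℕ) :
    (fun x => iteratedFDeriv ℝ i (fun y => f (a + y)) x)
      = fun x => iteratedFDeriv ℝ i f (a + x) := by
  induction i with
  | zero => funext x; ext m; simp
  | succ i ih =>
    funext x
    rw [iteratedFDeriv_succ_eq_comp_left, iteratedFDeriv_succ_eq_comp_left]
    simp only [Function.comp_apply]
    congr 1
    have hdiff : DifferentiableAt ℝ (iteratedFDeriv ℝ i f) (a + x) := by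
      have hi : (i : WithTop ℕ∞) < ((⊤:ℕ∞) : WithTop ℕ∞) := by
        exact_mod_cast (WithTop.coe_lt_top i : (i:ℕ∞) < ⊤)
      exact (hf.differentiable_iteratedFDeriv hi).differentiableAt
    have h1 : HasFDerivAt (fun y : E => a + y) (ContinuousLinearMap.id ℝ E) x := by
      simpa using (hasFDerivAt_id x).const_add a
    have h2 : HasFDerivAt (fun y : E => iteratedFDeriv ℝ i f (a + y))
        ((fderiv ℝ (iteratedFDeriv ℝ i f) (a + x)).comp (ContinuousLinearMap.id ℝ E)) x :=
      (hdiff.hasFDerivAt).comp x h1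
    have : (iteratedFDeriv ℝ i fun y => f (a + y)) = fun y => iteratedFDeriv ℝ i f (a + y) := ih
    rw [this, h2.fderiv, ContinuousLinearMap.comp_id]

lemma iteratedDeriv_line (f : E → F) (hf : ContDiff ℝ ((⊤:ℕ∞)) f) (a b : E) (j : ℕ) (s : ℝ) :
    iteratedDeriv j (fun s : ℝ => f (a + s • b)) s
      = iteratedFDeriv ℝ j f (a + s • b) (fun _ => b) := by
  set L : ℝ →L[ℝ] E := ContinuousLinearMap.toSpanSingleton ℝ b with hL
  have hfa : ContDiff ℝ ((⊤:ℕ∞)) (fun y => f (a + y)) :=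
    hf.comp (contDiff_const.add contDiff_id)
  have hcomp : (fun s : ℝ => f (a + s • b)) = (fun y => f (a + y)) ∘ L := by
    funext u; simp [hL, ContinuousLinearMap.toSpanSingleton_apply]
  rw [iteratedDeriv_eq_iteratedFDeriv, hcomp,
    L.iteratedFDeriv_comp_right hfa s (by exact_mod_cast (le_top : (j:ℕ∞) ≤ ⊤))]
  rw [ContinuousMultilinearMap.compContinuousLinearMap_apply]
  have := congrFun (itfd_comp_const_add f hf a j) (L s)
  simp only [hL, ContinuousLinearMap.toSpanSingleton_apply, one_smul] at this ⊢
  rw [this]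

lemma iteratedDerivWithin_eq_glob {φ : ℝ → F} (hφ : ContDiff ℝ ((⊤:ℕ∞)) φ) {s : Set ℝ}
    (hs : UniqueDiffOn ℝ s) {x : ℝ} (hx : x ∈ s) (j : ℕ) :
    iteratedDerivWithin j φ s x = iteratedDeriv j φ x := by
  have h := ((contDiff_iff_ftaylorSeries (𝕜 := ℝ) (f := φ) (n := ⊤)).mp
    hφ).hasFTaylorSeriesUpToOn s
  have := h.eq_iteratedFDerivWithin_of_uniqueDiffOn (m := j) (by exact_mod_cast le_top) hs hx
  rw [iteratedDerivWithin_eq_iteratedFDerivWithin, iteratedDeriv_eq_iteratedFDeriv, ← this]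
  rfl

end Aux

lemma coord_le_norm {n : ℕ} (y : Eu n) (i : Fin n) : |y i| ≤ ‖y‖ := by
  rw [EuclideanSpace.norm_eq y, show |y i| = Real.sqrt (‖y i‖^2) by
    rw [Real.sqrt_sq_eq_abs]; simp [Real.norm_eq_abs]]
  apply Real.sqrt_le_sqrt
  exact Finset.single_le_sum (f := fun j => ‖y j‖^2) (fun j _ => by positivity) (Finset.mem_univ i)

lemma eu_sum_single {n : ℕ} (y : Eu n) :
    y = ∑ i, y i • EuclideanSpace.single i (1 : ℝ) := by
  ext j
  rw [show (∑ i, y i • EuclideanSpace.single i (1:ℝ)) j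
      = ∑ i, (y i • EuclideanSpace.single i (1:ℝ)) j from by
    simp [Pi.single_apply]]
  simp [EuclideanSpace.single_apply]

lemma integrable_eta_mul_W {n : ℕ} (η : 𝓢(Eu n, ℂ)) {j : ℕ}
    (W : ContinuousMultilinearMap ℝ (fun _ : Fin j => Eu n) ℂ) :
    Integrable (fun y => η y * W (fun _ => y)) volume := by
  apply Integrable.mono' ((η.integrable_pow_mul volume j).const_mul ‖W‖)
  · exact (η.continuous.mul
      (W.cont.comp (continuous_pi fun _ => continuous_id))).aestronglyMeasurable
  · refine Filter.Eventually.of_forall fun y => ?_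
    rw [norm_mul]
    calc ‖η y‖ * ‖W fun _ => y‖ ≤ ‖η y‖ * (‖W‖ * ∏ _i : Fin j, ‖y‖) :=
          mul_le_mul_of_nonneg_left (W.le_opNorm _) (norm_nonneg _)
      _ = ‖W‖ * (‖y‖ ^ j * ‖η y‖) := by simp [Finset.prod_const]; ring

lemma moment_vanish {n k : ℕ} {η : 𝓢(Eu n, ℂ)} (hη : momZero n k ⇑η) {j : ℕ} (hj : j ≤ k)
    (W : ContinuousMultilinearMap ℝ (fun _ : Fin j => Eu n) ℂ) :
    ∫ y, η y * W (fun _ => y) = 0 := by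
  classical
  have expand : ∀ y : Eu n, W (fun _ => y)
      = ∑ c : Fin j → Fin n, (∏ m, y (c m)) • W (fun m => EuclideanSpace.single (c m) (1:ℝ)) := by
    intro y
    conv_lhs => rw [show (fun _ : Fin j => y)
      = fun _ : Fin j => ∑ i, y i • EuclideanSpace.single i (1:ℝ)
      from funext fun _ => eu_sum_single y]
    rw [show W (fun _ : Fin j => ∑ i, y i • EuclideanSpace.single i (1:ℝ))
        = W.toMultilinearMap (fun _ : Fin j => ∑ i, y i • EuclideanSpace.single i (1:ℝ)) from rfl]
    rw [MultilinearMap.map_sum]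
    refine Finset.sum_congr rfl fun c _ => ?_
    exact W.toMultilinearMap.map_smul_univ (fun m => y (c m))
      (fun m => EuclideanSpace.single (c m) (1:ℝ))
  calc ∫ y, η y * W (fun _ => y)
      = ∫ y, ∑ c : Fin j → Fin n, (W (fun m => EuclideanSpace.single (c m) (1:ℝ)))
          * (η y * ∏ m, ((y (c m) : ℂ))) := by
        congr 1; funext y
        rw [expand y, Finset.mul_sum]
        refine Finset.sum_congr rfl fun c _ => ?_
        rw [Complex.real_smul]
        push_cast
        ring
    _ = ∑ c : Fin j → Fin n, (W (fun m => EuclideanSpace.single (c m) (1:ℝ)))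
          * ∫ y, η y * ∏ m, ((y (c m) : ℂ)) := by
        rw [integral_finset_sum]
        · exact Finset.sum_congr rfl fun c _ => integral_const_mul _ _
        · intro c _
          apply Integrable.const_mul
          apply Integrable.mono' ((η.integrable_pow_mul volume j))
          · apply Continuous.aestronglyMeasurable
            exact η.continuous.mul (continuous_finset_prod _ fun m _ =>
              (Complex.continuous_ofReal.comp ((continuous_apply (c m)).comp (PiLp.continuous_ofLp 2 _))))
          · refine Filter.Eventually.of_forall fun y => ?_
            rw [norm_mul]
            calc ‖η y‖ * ‖∏ m, ((y (c m) : ℂ))‖ ≤ ‖η y‖ * ∏ _m : Fin j, ‖y‖ := by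
                  apply mul_le_mul_of_nonneg_left _ (norm_nonneg _)
                  rw [norm_prod]
                  apply Finset.prod_le_prod (fun _ _ => norm_nonneg _) fun m _ => ?_
                  simpa [Complex.norm_real, Real.norm_eq_abs] using coord_le_norm y (c m)
              _ = ‖y‖ ^ j * ‖η y‖ := by simp [Finset.prod_const]; ring
    _ = 0 := by
        apply Finset.sum_eq_zero fun c _ => ?_
        have hprod : ∀ y : Eu n, (∏ m, ((y (c m) : ℂ)))
            = ∏ i, ((y i : ℂ)) ^ (Finset.univ.filter fun m => c m = i).card := by
          intro y
          rw [← Finset.prod_fiberwise_of_maps_to (fun m _ => Finset.mem_univ (c m))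
            (fun m => ((y (c m) : ℂ)))]
          refine Finset.prod_congr rfl fun i _ => ?_
          rw [Finset.prod_congr rfl (fun m hm => by
            rw [(Finset.mem_filter.mp hm).2]), Finset.prod_const]
        have hsum : (∑ i, (Finset.univ.filter fun m => c m = i).card) = j := by
          rw [← Finset.card_eq_sum_card_fiberwise (fun m _ => Finset.mem_univ (c m))]
          simp
        have h0 := hη (fun i => (Finset.univ.filter fun m => c m = i).card) (by rw [hsum]; exact hj)
        rw [show (∫ y, η y * ∏ m, ((y (c m) : ℂ))) = 0 from by
          rw [show (fun y => η y * ∏ m, ((y (c m) : ℂ)))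
            = fun y => η y * ∏ i, ((y i : ℂ)) ^ (Finset.univ.filter fun m => c m = i).card from
            funext fun y => by rw [hprod y]]
          exact h0]
        ring

section Pointwise

variable {n : ℕ}

lemma psi_smooth_top (ψ : 𝓢(Eu n, ℂ)) {t : ℝ} :
    ContDiff ℝ ((⊤:ℕ∞)) (fun u : Eu n => ((t ^ n : ℝ) : ℂ)⁻¹ * ψ u) :=
  contDiff_const.mul (ψ.smooth ⊤)

lemma phi_smooth_top (ψ : 𝓢(Eu n, ℂ)) {t : ℝ} (a b : Eu n) :
    ContDiff ℝ ((⊤:ℕ∞)) (fun s : ℝ => ((t ^ n : ℝ) : ℂ)⁻¹ * ψ (a + s • b)) :=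
  (psi_smooth_top ψ).comp (contDiff_const.add (contDiff_id.smul contDiff_const))

/-- The key pointwise Taylor-remainder estimate. -/
lemma pointwise_est (ψ : 𝓢(Eu n, ℂ)) (k M' : ℕ) {S : ℝ}
    (hSb : ∀ u : Eu n, (1 + ‖u‖) ^ M' * ‖iteratedFDeriv ℝ (k+1) (⇑ψ) u‖ ≤ S)
    {t : ℝ} (ht : 1 ≤ t) (x y : Eu n) :
    ‖dil n (⇑ψ) t (x - y) - taylorWithinEval
        (fun s : ℝ => ((t ^ n : ℝ) : ℂ)⁻¹ * ψ ((t⁻¹ • x) + s • (-(t⁻¹ • y))))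
        k (Set.Icc 0 1) 0 1‖
      ≤ (t ^ (n+k+1) : ℝ)⁻¹ * ((1 + t⁻¹ * ‖x‖) ^ M')⁻¹
          * (S * (‖y‖ ^ (k+1) * (1 + ‖y‖) ^ M')) / k.factorial := by
  have ht0 : (0:ℝ) < t := lt_of_lt_of_le one_pos ht
  have hti : t⁻¹ ≤ 1 := by rw [inv_le_one_iff₀]; right; exact ht
  have hti0 : (0:ℝ) ≤ t⁻¹ := by positivity
  have hS0 : 0 ≤ S := le_trans (by positivity) (hSb 0)
  set c : ℂ := ((t ^ n : ℝ) : ℂ)⁻¹ with hc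
  set f : Eu n → ℂ := fun u => c * ψ u with hf
  have hfC : ContDiff ℝ ((⊤:ℕ∞)) f := psi_smooth_top ψ
  set a : Eu n := t⁻¹ • x with ha
  set b : Eu n := -(t⁻¹ • y) with hb
  have hna : ‖a‖ = t⁻¹ * ‖x‖ := by
    rw [ha, norm_smul, Real.norm_eq_abs, abs_of_nonneg hti0]
  have hnb : ‖b‖ = t⁻¹ * ‖y‖ := by
    rw [hb, norm_neg, norm_smul, Real.norm_eq_abs, abs_of_nonneg hti0]
  set φ : ℝ → ℂ := fun s : ℝ => f (a + s • b) with hφ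
  have hφC : ContDiff ℝ ((⊤:ℕ∞)) φ := phi_smooth_top ψ a b
  have hφ1 : φ 1 = dil n (⇑ψ) t (x - y) := by
    rw [hφ]
    simp only [one_smul, dil, hf, hc]
    congr 2
    rw [ha, hb, smul_sub]
    abel
  set Cr : ℝ := (t ^ (n+k+1) : ℝ)⁻¹ * ((1 + t⁻¹ * ‖x‖) ^ M')⁻¹
      * (S * (‖y‖ ^ (k+1) * (1 + ‖y‖) ^ M')) with hCr
  have hder : ∀ s ∈ Set.Icc (0:ℝ) 1,
      ‖iteratedDerivWithin (k+1) φ (Set.Icc 0 1) s‖ ≤ Cr := by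
    intro s hs
    rw [iteratedDerivWithin_eq_glob hφC (uniqueDiffOn_Icc one_pos) hs,
      iteratedDeriv_line f hfC a b (k+1) s]
    set u : Eu n := a + s • b with hu
    have hψk : ContDiff ℝ ((k+1:ℕ) : WithTop ℕ∞) ⇑ψ :=
      (ψ.smooth ⊤).of_le (by exact_mod_cast (le_top : ((k+1:ℕ):ℕ∞) ≤ ⊤))
    have hcu : ‖iteratedFDeriv ℝ (k+1) f u‖
        = (t^n : ℝ)⁻¹ * ‖iteratedFDeriv ℝ (k+1) (⇑ψ) u‖ := by
      have hfe : f = c • (⇑ψ) := by funext v; simp [hf, smul_eq_mul]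
      rw [hfe, iteratedFDeriv_const_smul_apply hψk.contDiffAt, norm_smul]
      congr 1
      rw [hc, norm_inv, Complex.norm_real, Real.norm_eq_abs, abs_of_nonneg (by positivity)]
    have hA0 : (0:ℝ) < (1 + ‖u‖) ^ M' := by positivity
    have hB0 : (0:ℝ) < (1 + t⁻¹ * ‖x‖) ^ M' := by positivity
    have h5 : ‖iteratedFDeriv ℝ (k+1) (⇑ψ) u‖ ≤ S / (1 + ‖u‖) ^ M' := by
      rw [le_div_iff₀ hA0]
      calc ‖iteratedFDeriv ℝ (k+1) (⇑ψ) u‖ * (1 + ‖u‖) ^ M'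
          = (1 + ‖u‖) ^ M' * ‖iteratedFDeriv ℝ (k+1) (⇑ψ) u‖ := mul_comm _ _
        _ ≤ S := hSb u
    have h6 : 1 + t⁻¹ * ‖x‖ ≤ (1 + ‖u‖) * (1 + ‖y‖) := by
      have hsb : ‖s • b‖ ≤ ‖y‖ := by
        rw [norm_smul, Real.norm_eq_abs, hnb]
        have hs1 : |s| ≤ 1 := abs_le.mpr ⟨by linarith [hs.1], hs.2⟩
        calc |s| * (t⁻¹ * ‖y‖) ≤ 1 * (1 * ‖y‖) := by
              apply mul_le_mul hs1 _ (by positivity) zero_le_one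
              exact mul_le_mul hti le_rfl (norm_nonneg _) zero_le_one
          _ = ‖y‖ := by ring
      have h61 : ‖a‖ ≤ ‖u‖ + ‖y‖ := by
        calc ‖a‖ = ‖u - s • b‖ := by rw [hu]; congr 1; abel
          _ ≤ ‖u‖ + ‖s • b‖ := norm_sub_le _ _
          _ ≤ ‖u‖ + ‖y‖ := by linarith
      rw [← hna]
      nlinarith [norm_nonneg u, norm_nonneg y, norm_nonneg a]
    have h7 : (1 + t⁻¹ * ‖x‖) ^ M' ≤ (1 + ‖u‖) ^ M' * (1 + ‖y‖) ^ M' := by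
      rw [← mul_pow]
      exact pow_le_pow_left₀ (by positivity) h6 _
    have hfrac : S / (1 + ‖u‖) ^ M'
        ≤ S * (1 + ‖y‖) ^ M' / (1 + t⁻¹ * ‖x‖) ^ M' := by
      rw [div_le_div_iff₀ hA0 hB0]
      nlinarith [h7, hS0, hA0, hB0]
    calc ‖iteratedFDeriv ℝ (k+1) f u (fun _ => b)‖
        ≤ ‖iteratedFDeriv ℝ (k+1) f u‖ * ∏ _i : Fin (k+1), ‖b‖ :=
          (iteratedFDeriv ℝ (k+1) f u).le_opNorm _
      _ = ((t^n : ℝ)⁻¹ * ‖iteratedFDeriv ℝ (k+1) (⇑ψ) u‖) * (t⁻¹ * ‖y‖) ^ (k+1) := by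
          rw [hcu, Finset.prod_const, Finset.card_univ, Fintype.card_fin, hnb]
      _ ≤ ((t^n : ℝ)⁻¹ * (S / (1 + ‖u‖) ^ M')) * (t⁻¹ * ‖y‖) ^ (k+1) := by
          apply mul_le_mul_of_nonneg_right _ (by positivity)
          exact mul_le_mul_of_nonneg_left h5 (by positivity)
      _ = ((t ^ (n+k+1) : ℝ)⁻¹ * ‖y‖ ^ (k+1)) * (S / (1 + ‖u‖) ^ M') := by
          have htne : t ≠ 0 := by positivity
          ring
      _ ≤ ((t ^ (n+k+1) : ℝ)⁻¹ * ‖y‖ ^ (k+1))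
            * (S * (1 + ‖y‖) ^ M' / (1 + t⁻¹ * ‖x‖) ^ M') := by
          apply mul_le_mul_of_nonneg_left hfrac (by positivity)
      _ = Cr := by rw [hCr]; field_simp
  have htay := taylor_mean_remainder_bound (f := φ) (a := 0) (b := 1) (C := Cr) (n := k)
    zero_le_one (hφC.of_le (by exact_mod_cast le_top)).contDiffOn
    (Set.right_mem_Icc.mpr zero_le_one) hder
  rw [hφ1] at htay
  calc ‖dil n (⇑ψ) t (x - y) - taylorWithinEval φ k (Set.Icc 0 1) 0 1‖
      ≤ Cr * (1 - 0) ^ (k+1) / k.factorial := htay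
    _ = Cr / k.factorial := by norm_num

/-- The Taylor polynomial expansion as a finite sum of multilinear terms. -/
lemma taylor_expand_eq (ψ : 𝓢(Eu n, ℂ)) (k : ℕ) {t : ℝ} (ht0 : 0 < t) (x y : Eu n) :
    taylorWithinEval
        (fun s : ℝ => ((t ^ n : ℝ) : ℂ)⁻¹ * ψ ((t⁻¹ • x) + s • (-(t⁻¹ • y))))
        k (Set.Icc 0 1) 0 1
    = ∑ j ∈ Finset.range (k+1), (((j.factorial : ℝ))⁻¹ * (-t⁻¹)^j) •
        (iteratedFDeriv ℝ j (fun u : Eu n => ((t ^ n : ℝ) : ℂ)⁻¹ * ψ u) (t⁻¹ • x)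
          (fun _ => y)) := by
  set c : ℂ := ((t ^ n : ℝ) : ℂ)⁻¹ with hc
  set f : Eu n → ℂ := fun u => c * ψ u with hf
  have hfC : ContDiff ℝ ((⊤:ℕ∞)) f := psi_smooth_top ψ
  set a : Eu n := t⁻¹ • x with ha
  set b : Eu n := -(t⁻¹ • y) with hb
  set φ : ℝ → ℂ := fun s : ℝ => f (a + s • b) with hφ
  have hφC : ContDiff ℝ ((⊤:ℕ∞)) φ := phi_smooth_top ψ a b
  rw [taylor_within_apply]
  refine Finset.sum_congr rfl fun j hj => ?_
  have h1 : iteratedDerivWithin j φ (Set.Icc 0 1) 0 = iteratedDeriv j φ 0 :=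
    iteratedDerivWithin_eq_glob hφC (uniqueDiffOn_Icc one_pos)
      (Set.left_mem_Icc.mpr zero_le_one) j
  have h2 : iteratedDeriv j φ 0 = iteratedFDeriv ℝ j f a (fun _ => b) := by
    rw [hφ, iteratedDeriv_line f hfC a b j 0]
    congr 1
    rw [zero_smul, add_zero]
  have h3 : iteratedFDeriv ℝ j f a (fun _ => b) = (-t⁻¹)^j • iteratedFDeriv ℝ j f a (fun _ => y) := by
    have hbe : b = (-t⁻¹) • y := by rw [hb, neg_smul]
    calc iteratedFDeriv ℝ j f a (fun _ => b)
        = iteratedFDeriv ℝ j f a (fun _ => (-t⁻¹) • y) := by rw [hbe]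
      _ = (∏ _i : Fin j, (-t⁻¹)) • iteratedFDeriv ℝ j f a (fun _ => y) :=
          (iteratedFDeriv ℝ j f a).toMultilinearMap.map_smul_univ _ _
      _ = (-t⁻¹)^j • iteratedFDeriv ℝ j f a (fun _ => y) := by
          rw [Finset.prod_const, Finset.card_univ, Fintype.card_fin]
  rw [h1, h2, h3, smul_smul]
  congr 1
  norm_num

end Pointwise


/-- Euclidean case of Lemma 3.2(1). -/
theorem stmt_1 (n : ℕ) (η ψ : 𝓢(Eu n, ℂ)) (k : ℕ) (hη : momZero n k ⇑η) :
    ∀ M : ℝ, 0 ≤ M → ∃ C : ℝ, ∀ t : ℝ, 1 ≤ t → ∀ x : Eu n,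
      ‖cnv n ⇑η (dil n ⇑ψ t) x‖ ≤
        C * t ^ (-(k + 1 : ℝ) - n) * (1 + t⁻¹ * ‖x‖) ^ (-M) := by
  intro M hM
  classical
  set M' : ℕ := ⌈M⌉₊ with hM'
  set S : ℝ := 2 ^ M' * ((Finset.Iic (M', k+1)).sup
    (fun m => SchwartzMap.seminorm ℝ m.1 m.2)) ψ with hS
  have hSb : ∀ u : Eu n, (1 + ‖u‖) ^ M' * ‖iteratedFDeriv ℝ (k+1) (⇑ψ) u‖ ≤ S := fun u =>
    one_add_le_sup_seminorm_apply (𝕜 := ℝ) (m := (M', k+1)) le_rfl le_rfl ψ u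
  have hS0 : 0 ≤ S := le_trans (by positivity) (hSb 0)
  set G : Eu n → ℝ := fun y => 2 ^ M' * (‖y‖ ^ (k+1) * ‖η y‖)
      + 2 ^ M' * (‖y‖ ^ (k+1+M') * ‖η y‖) with hG
  have hGint : Integrable G volume :=
    ((η.integrable_pow_mul volume (k+1)).const_mul _).add
      ((η.integrable_pow_mul volume (k+1+M')).const_mul _)
  have hG0 : ∀ y : Eu n, 0 ≤ G y := by
    intro y; rw [hG]; positivity
  have hGbd : ∀ y : Eu n, ‖η y‖ * (‖y‖ ^ (k+1) * (1 + ‖y‖) ^ M') ≤ G y := by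
    intro y
    have h1 : (1 + ‖y‖) ^ M' ≤ 2 ^ M' * (1 + ‖y‖ ^ M') := by
      calc (1 + ‖y‖) ^ M' ≤ (2 * max 1 ‖y‖) ^ M' := by
            apply pow_le_pow_left₀ (by positivity)
            have := le_max_left 1 ‖y‖; have := le_max_right 1 ‖y‖; linarith
        _ = 2 ^ M' * (max 1 ‖y‖) ^ M' := mul_pow _ _ _
        _ ≤ 2 ^ M' * (1 + ‖y‖ ^ M') := by
            apply mul_le_mul_of_nonneg_left _ (by positivity)
            rcases max_cases 1 ‖y‖ with ⟨h, _⟩ | ⟨h, _⟩ <;> rw [h]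
            · rw [one_pow]; linarith [pow_nonneg (norm_nonneg y) M']
            · linarith [pow_nonneg (norm_nonneg y) M']
    calc ‖η y‖ * (‖y‖ ^ (k+1) * (1 + ‖y‖) ^ M')
        ≤ ‖η y‖ * (‖y‖ ^ (k+1) * (2 ^ M' * (1 + ‖y‖ ^ M'))) := by
          apply mul_le_mul_of_nonneg_left _ (norm_nonneg _)
          exact mul_le_mul_of_nonneg_left h1 (by positivity)
      _ = G y := by rw [hG]; rw [pow_add]; ring
  have hIG0 : 0 ≤ ∫ y, G y := integral_nonneg hG0
  refine ⟨S / (k.factorial : ℝ) * ∫ y, G y, fun t ht x => ?_⟩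
  have ht0 : (0:ℝ) < t := lt_of_lt_of_le one_pos ht
  have hti0 : (0:ℝ) ≤ t⁻¹ := by positivity
  set β : ℝ := 1 + t⁻¹ * ‖x‖ with hβ
  have hβ1 : (1:ℝ) ≤ β := by
    rw [hβ]; have : 0 ≤ t⁻¹ * ‖x‖ := by positivity
    linarith
  have hβ0 : (0:ℝ) < β := lt_of_lt_of_le one_pos hβ1
  -- the Taylor polynomial
  set f0 : Eu n → ℂ := fun u => ((t ^ n : ℝ) : ℂ)⁻¹ * ψ u with hf0
  set T : Eu n → ℂ := fun y => taylorWithinEval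
      (fun s : ℝ => ((t ^ n : ℝ) : ℂ)⁻¹ * ψ ((t⁻¹ • x) + s • (-(t⁻¹ • y))))
      k (Set.Icc 0 1) 0 1 with hT
  have hTrep : ∀ y : Eu n, T y = ∑ j ∈ Finset.range (k+1),
      (((j.factorial : ℝ))⁻¹ * (-t⁻¹)^j) •
        (iteratedFDeriv ℝ j f0 (t⁻¹ • x) (fun _ => y)) := fun y =>
    taylor_expand_eq ψ k ht0 x y
  have hTmul : (fun y => η y * T y) = fun y => ∑ j ∈ Finset.range (k+1),
      (((j.factorial : ℝ))⁻¹ * (-t⁻¹)^j) •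
        (η y * (iteratedFDeriv ℝ j f0 (t⁻¹ • x) (fun _ => y))) := by
    funext y
    rw [hTrep y, Finset.mul_sum]
    exact Finset.sum_congr rfl fun j _ => mul_smul_comm _ _ _
  have hint : ∀ j : ℕ, Integrable (fun y =>
      (((j.factorial : ℝ))⁻¹ * (-t⁻¹)^j) •
        (η y * (iteratedFDeriv ℝ j f0 (t⁻¹ • x) (fun _ => y)))) volume := fun j =>
    (integrable_eta_mul_W η (iteratedFDeriv ℝ j f0 (t⁻¹ • x))).fun_smul _
  have h2int : Integrable (fun y => η y * T y) volume := by
    rw [hTmul]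
    exact integrable_finset_sum _ fun j _ => hint j
  have h2zero : (∫ y, η y * T y) = 0 := by
    rw [hTmul, integral_finset_sum _ (fun j _ => hint j)]
    apply Finset.sum_eq_zero fun j hj => ?_
    rw [integral_smul, moment_vanish hη (Nat.lt_succ_iff.mp (Finset.mem_range.mp hj)), smul_zero]
  -- integrability of the main term
  have hdilc : Continuous (dil n (⇑ψ) t) := by
    apply continuous_const.mul
    exact ψ.continuous.comp (continuous_const_smul t⁻¹)
  have h1int : Integrable (fun y => η y * dil n (⇑ψ) t (x - y)) volume := by
    apply Integrable.mono' (η.integrable.norm.const_mul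
      ((t^n : ℝ)⁻¹ * (SchwartzMap.seminorm ℝ 0 0) ψ))
    · exact (η.continuous.mul (hdilc.comp (continuous_const.sub continuous_id))).aestronglyMeasurable
    · refine Filter.Eventually.of_forall fun y => ?_
      rw [norm_mul]
      have hd : ‖dil n (⇑ψ) t (x - y)‖ ≤ (t^n : ℝ)⁻¹ * (SchwartzMap.seminorm ℝ 0 0) ψ := by
        rw [dil, norm_mul, norm_inv, Complex.norm_real, Real.norm_eq_abs,
          abs_of_nonneg (by positivity)]
        exact mul_le_mul_of_nonneg_left (ψ.norm_le_seminorm ℝ _) (by positivity)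
      calc ‖η y‖ * ‖dil n (⇑ψ) t (x - y)‖
          ≤ ‖η y‖ * ((t^n : ℝ)⁻¹ * (SchwartzMap.seminorm ℝ 0 0) ψ) :=
            mul_le_mul_of_nonneg_left hd (norm_nonneg _)
        _ = (t^n : ℝ)⁻¹ * (SchwartzMap.seminorm ℝ 0 0) ψ * ‖η y‖ := by ring
  -- change of variables
  have hchg : cnv n (⇑η) (dil n (⇑ψ) t) x = ∫ y, η y * dil n (⇑ψ) t (x - y) := by
    have h := integral_sub_left_eq_self (fun y => η (x - y) * dil n (⇑ψ) t y) volume x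
    simp only [sub_sub_cancel] at h
    exact h.symm
  -- rpow facts
  have hrw : t ^ (-(k + 1 : ℝ) - n) = ((t ^ (n+k+1) : ℝ))⁻¹ := by
    rw [show (-(k + 1 : ℝ) - n) = -((n+k+1 : ℕ) : ℝ) by push_cast; ring,
      Real.rpow_neg ht0.le, Real.rpow_natCast]
  have hβM : (β ^ M' : ℝ)⁻¹ ≤ β ^ (-M) := by
    rw [show ((β ^ M' : ℝ))⁻¹ = β ^ (-(M' : ℝ)) by
      rw [← Real.rpow_natCast β M', ← Real.rpow_neg hβ0.le]]
    exact Real.rpow_le_rpow_of_exponent_le hβ1 (neg_le_neg (Nat.le_ceil M))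
  have htpos : (0:ℝ) < t ^ (-(k + 1 : ℝ) - n) := Real.rpow_pos_of_pos ht0 _
  have hβpos : (0:ℝ) < β ^ (-M) := Real.rpow_pos_of_pos hβ0 _
  -- the pointwise bound
  set Q : ℝ := S / (k.factorial : ℝ) * (t ^ (-(k + 1 : ℝ) - n) * β ^ (-M)) with hQ
  have key : ∀ y : Eu n, ‖η y * dil n (⇑ψ) t (x - y) - η y * T y‖ ≤ Q * G y := by
    intro y
    have hpt := pointwise_est ψ k M' hSb ht x y
    calc ‖η y * dil n (⇑ψ) t (x - y) - η y * T y‖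
        = ‖η y‖ * ‖dil n (⇑ψ) t (x - y) - T y‖ := by rw [← mul_sub, norm_mul]
      _ ≤ ‖η y‖ * ((t ^ (n+k+1) : ℝ)⁻¹ * ((1 + t⁻¹ * ‖x‖) ^ M')⁻¹
            * (S * (‖y‖ ^ (k+1) * (1 + ‖y‖) ^ M')) / k.factorial) :=
          mul_le_mul_of_nonneg_left hpt (norm_nonneg _)
      _ = (S / (k.factorial : ℝ) * ((t ^ (n+k+1) : ℝ)⁻¹ * (β ^ M')⁻¹))
            * (‖η y‖ * (‖y‖ ^ (k+1) * (1 + ‖y‖) ^ M')) := by rw [hβ]; ring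
      _ ≤ (S / (k.factorial : ℝ) * (t ^ (-(k + 1 : ℝ) - n) * β ^ (-M))) * G y := by
          apply mul_le_mul _ (hGbd y) (by positivity) (by positivity)
          apply mul_le_mul_of_nonneg_left _ (by positivity)
          rw [hrw]
          exact mul_le_mul_of_nonneg_left hβM (by positivity)
      _ = Q * G y := by rw [hQ]
  -- assemble
  have hnorm : ‖∫ y, (η y * dil n (⇑ψ) t (x - y) - η y * T y)‖ ≤ ∫ y, Q * G y :=
    norm_integral_le_of_norm_le (hGint.const_mul Q) (Filter.Eventually.of_forall key)
  calc ‖cnv n (⇑η) (dil n (⇑ψ) t) x‖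
      = ‖∫ y, (η y * dil n (⇑ψ) t (x - y) - η y * T y)‖ := by
        rw [hchg, integral_sub h1int h2int, h2zero, sub_zero]
    _ ≤ ∫ y, Q * G y := hnorm
    _ = Q * ∫ y, G y := by rw [integral_const_mul]
    _ = S / (k.factorial : ℝ) * (∫ y, G y) * t ^ (-(k + 1 : ℝ) - n) * β ^ (-M) := by
        rw [hQ]; ring


end
end

section
/- Let b, N ≥ 0 and let k be a nonnegative integer with k + 1 ≥ b. If η, ψ are Schwartz functions on ℝⁿ with ∫_{ℝⁿ} ψ(x) x^I dx = 0 for every multi-index I with |I| ≤ k, then sup_{0 < t ≤ 1} t^{-b} ∫_{ℝⁿ} (1+|x|)^N |(η * ψ_t)(x)| dx < ∞. In particular, if ∫_{ℝⁿ} ψ dx = 0 then there exists ε > 0 such that sup_{0 < t ≤ 1} t^{-ε} ∫_{ℝⁿ} (1+|x|)^N |(η * ψ_t)(x)| dx < ∞ for every N ≥ 0. -/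
set_option maxHeartbeats 1000000


open MeasureTheory Metric SchwartzMap
open scoped ENNReal

noncomputable section

lemma taylorC (h : ℕ → ℝ → ℂ) (hd : ∀ j s, HasDerivAt (h j) (h (j+1) s) s) (k : ℕ) :
    h 0 1 = (∑ j ∈ Finset.range (k+1), ((j.factorial : ℝ))⁻¹ • h j 0)
      + ∫ s in (0:ℝ)..1, (((1-s)^k / (k.factorial : ℝ)) • h (k+1) s) := by
  have hcont : ∀ j, Continuous (h j) :=
    fun j => continuous_iff_continuousAt.2 fun s => (hd j s).continuousAt
  induction k with
  | zero =>
      have e : (∫ s in (0:ℝ)..1, (((1-s)^0 / ((Nat.factorial 0 : ℕ) : ℝ)) • h 1 s))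
          = h 0 1 - h 0 0 := by
        simp only [pow_zero, Nat.factorial_zero, Nat.cast_one, div_one, one_smul]
        exact intervalIntegral.integral_eq_sub_of_hasDerivAt
          (fun s _ => hd 0 s) ((hcont 1).intervalIntegrable 0 1)
      rw [e]; simp
  | succ k ih =>
      have hu : ∀ s : ℝ, HasDerivAt (fun s : ℝ => (1-s)^(k+1) / ((k+1).factorial : ℝ))
          (-((1-s)^k / (k.factorial : ℝ))) s := by
        intro s
        have h1 : HasDerivAt (fun s : ℝ => (1-s)) (-1) s := by
          simpa using (hasDerivAt_id s).const_sub 1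
        have h2 := (h1.pow (k+1)).div_const ((k+1).factorial : ℝ)
        refine h2.congr_deriv ?_
        have : ((k+1).factorial : ℝ) = (k+1) * (k.factorial : ℝ) := by
          rw [Nat.factorial_succ]; push_cast; ring
        rw [this]
        rw [Nat.add_sub_cancel]
        have hk : (k.factorial : ℝ) ≠ 0 := Nat.cast_ne_zero.2 k.factorial_ne_zero
        field_simp
        push_cast
        ring
      have hF : ∀ s : ℝ, HasDerivAt
          (fun s : ℝ => ((1-s)^(k+1) / ((k+1).factorial : ℝ)) • h (k+1) s)
          (((1-s)^(k+1) / ((k+1).factorial : ℝ)) • h (k+1+1) s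
            + (-((1-s)^k / (k.factorial : ℝ))) • h (k+1) s) s :=
        fun s => (hu s).smul (hd (k+1) s)
      have hcont1 : Continuous fun s : ℝ => (-((1-s)^k / (k.factorial : ℝ))) • h (k+1) s := by
        fun_prop
      have hcont2 : Continuous fun s : ℝ => ((1-s)^(k+1) / ((k+1).factorial : ℝ)) • h (k+1+1) s := by
        fun_prop
      have ftc := intervalIntegral.integral_eq_sub_of_hasDerivAt (fun s _ => hF s)
        ((hcont2.add hcont1).intervalIntegrable 0 1)
      rw [intervalIntegral.integral_add (hcont2.intervalIntegrable 0 1)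
        (hcont1.intervalIntegrable 0 1)] at ftc
      have e1 : (∫ s in (0:ℝ)..1, (-((1-s)^k / (k.factorial : ℝ))) • h (k+1) s)
          = - ∫ s in (0:ℝ)..1, ((1-s)^k / (k.factorial : ℝ)) • h (k+1) s := by
        rw [← intervalIntegral.integral_neg]; congr 1; funext s; rw [neg_smul]
      rw [e1] at ftc
      have e2 : ((1-(1:ℝ))^(k+1) / ((k+1).factorial : ℝ)) • h (k+1) 1 = 0 := by
        norm_num
      have e3 : ((1-(0:ℝ))^(k+1) / ((k+1).factorial : ℝ)) • h (k+1) 0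
          = (((k+1).factorial : ℝ))⁻¹ • h (k+1) 0 := by rw [sub_zero, one_pow, one_div]
      rw [e2, e3] at ftc
      have key : (∫ s in (0:ℝ)..1, ((1-s)^k / (k.factorial : ℝ)) • h (k+1) s)
          = (((k+1).factorial : ℝ))⁻¹ • h (k+1) 0
            + ∫ s in (0:ℝ)..1, ((1-s)^(k+1) / ((k+1).factorial : ℝ)) • h (k+1+1) s := by
        linear_combination (norm := module) -ftc
      rw [ih, key]
      conv_rhs => rw [Finset.sum_range_succ]
      rw [← add_assoc]
lemma derivFamily (n : ℕ) (η : 𝓢(Eu n, ℂ)) (p v : Eu n) (j : ℕ) (s : ℝ) :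
    HasDerivAt (fun s : ℝ => iteratedFDeriv ℝ j (⇑η) (p + s • v) (fun _ => v))
      (iteratedFDeriv ℝ (j+1) (⇑η) (p + s • v) (fun _ => v)) s := by
  have hφ : HasFDerivAt (iteratedFDeriv ℝ j (⇑η))
      (fderiv ℝ (iteratedFDeriv ℝ j (⇑η)) (p + s • v)) (p + s • v) :=
    ((η.smooth ⊤).differentiable_iteratedFDeriv
      (by exact_mod_cast ENat.coe_lt_top j) _).hasFDerivAt
  have hc : HasDerivAt (fun s : ℝ => p + s • v) v s := by
    simpa using ((hasDerivAt_id s).smul_const v).const_add p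
  have hcomp := hφ.comp_hasDerivAt s hc
  have h2 := (ContinuousMultilinearMap.apply ℝ (fun _ : Fin j => Eu n) ℂ
      (fun _ => v)).hasFDerivAt.comp_hasDerivAt s hcomp
  have e : iteratedFDeriv ℝ (j+1) (⇑η) (p + s • v) (fun _ => v)
      = (fderiv ℝ (iteratedFDeriv ℝ j (⇑η)) (p + s • v)) v (fun _ => v) := by
    rw [iteratedFDeriv_succ_apply_left]; rfl
  rw [e]
  exact h2
lemma coord_le (n : ℕ) (y : Eu n) (i : Fin n) : |y i| ≤ ‖y‖ := by
  rw [EuclideanSpace.norm_eq]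
  rw [← Real.sqrt_sq (abs_nonneg (y i))]
  apply Real.sqrt_le_sqrt
  rw [sq_abs]
  calc (y i)^2 ≤ ∑ j, (y j)^2 :=
        Finset.single_le_sum (f := fun j => (y j)^2) (fun j _ => sq_nonneg _) (Finset.mem_univ i)
    _ = ∑ j, ‖y j‖^2 := by simp [Real.norm_eq_abs, sq_abs]

lemma eu_decomp (n : ℕ) (y : Eu n) :
    y = ∑ i, y i • EuclideanSpace.single i (1:ℝ) := by
  have := (EuclideanSpace.basisFun (Fin n) ℝ).sum_repr y
  simp only [EuclideanSpace.basisFun_repr, EuclideanSpace.basisFun_apply] at this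
  exact this.symm

lemma integrable_polymul (n j : ℕ) (ψ : 𝓢(Eu n, ℂ)) (f : Eu n → ℂ) (c : ℝ)
    (hf : Continuous f) (hbd : ∀ y, ‖f y‖ ≤ c * ‖y‖ ^ j) :
    Integrable (fun y : Eu n => f y * ψ y) := by
  refine ((ψ.integrable_pow_mul volume j).const_mul c).mono'
    ((hf.mul ψ.continuous).aestronglyMeasurable) ?_
  filter_upwards with y
  rw [norm_mul]
  calc ‖f y‖ * ‖ψ y‖ ≤ (c * ‖y‖ ^ j) * ‖ψ y‖ :=
        mul_le_mul_of_nonneg_right (hbd y) (norm_nonneg _)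
    _ = c * (‖y‖ ^ j * ‖ψ y‖) := by ring

lemma momVanish (n k : ℕ) (ψ : 𝓢(Eu n, ℂ)) (hψ : momZero n k ⇑ψ) (j : ℕ) (hj : j ≤ k)
    (T : ContinuousMultilinearMap ℝ (fun _ : Fin j => Eu n) ℂ) :
    ∫ y : Eu n, (T fun _ => y) * ψ y = 0 := by
  have expand : ∀ y : Eu n, (T fun _ => y)
      = ∑ r : Fin j → Fin n, (∏ m, y (r m)) • (T fun m => EuclideanSpace.single (r m) (1:ℝ)) := by
    intro y
    conv_lhs => rw [show (fun _ : Fin j => y) = fun _ : Fin j => ∑ i, y i • EuclideanSpace.single i (1:ℝ) by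
      funext m; exact eu_decomp n y]
    rw [← ContinuousMultilinearMap.coe_coe, MultilinearMap.map_sum]
    congr 1
    funext r
    rw [MultilinearMap.map_smul_univ]
  have : ∀ y : Eu n, (T fun _ => y) * ψ y
      = ∑ r : Fin j → Fin n, (T fun m => EuclideanSpace.single (r m) (1:ℝ))
          * ((∏ m, ((y (r m) : ℂ))) * ψ y) := by
    intro y
    rw [expand y, Finset.sum_mul]
    congr 1
    funext r
    rw [Complex.real_smul]
    push_cast
    ring
  rw [MeasureTheory.integral_congr_ae (Filter.Eventually.of_forall this)]
  rw [MeasureTheory.integral_finset_sum]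
  · apply Finset.sum_eq_zero
    intro r _
    rw [MeasureTheory.integral_const_mul]
    have pid : ∀ y : Eu n, (∏ m, ((y (r m) : ℂ))) * ψ y
        = ψ y * ∏ i, ((y i : ℂ)) ^ ((Finset.univ.filter fun m => r m = i).card) := by
      intro y
      rw [mul_comm]
      congr 1
      rw [← Finset.prod_fiberwise_of_maps_to (fun m _ => Finset.mem_univ (r m))
        (fun m => ((y (r m) : ℂ)))]
      apply Finset.prod_congr rfl
      intro i _
      rw [Finset.prod_congr rfl (fun m hm => by
        rw [(Finset.mem_filter.1 hm).2]), Finset.prod_const]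
    rw [MeasureTheory.integral_congr_ae (Filter.Eventually.of_forall pid)]
    rw [hψ _ (by
      rw [← Finset.card_eq_sum_card_fiberwise (fun m _ => Finset.mem_univ (r m))]
      simpa using hj), mul_zero]
  · intro r _
    apply Integrable.const_mul
    apply integrable_polymul n j ψ _ 1
      (continuous_finset_prod _ fun m _ =>
        Complex.continuous_ofReal.comp (EuclideanSpace.proj (𝕜 := ℝ) (r m)).continuous)
    intro y
    rw [one_mul]
    show ‖(∏ m : Fin j, ((y (r m) : ℂ)))‖ ≤ ‖y‖ ^ j
    rw [show ‖(∏ m, ((y (r m) : ℂ)))‖ = ∏ m : Fin j, |y (r m)| by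
      rw [norm_prod]; congr 1; funext m; exact (Complex.norm_real _).trans (Real.norm_eq_abs _)]
    calc ∏ m : Fin j, |y (r m)| ≤ ∏ m : Fin j, ‖y‖ :=
          Finset.prod_le_prod (fun m _ => abs_nonneg _) (fun m _ => coord_le n y (r m))
      _ = ‖y‖ ^ j := by rw [Finset.prod_const, Finset.card_univ, Fintype.card_fin]
lemma pointwise_bound (n k : ℕ) (η ψ : 𝓢(Eu n, ℂ)) (hψ : momZero n k ⇑ψ) (m : ℕ) :
    ∃ C : ℝ, 0 ≤ C ∧ ∀ t : ℝ, 0 < t → t ≤ 1 → ∀ x : Eu n,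
      ‖cnv n ⇑η (dil n ⇑ψ t) x‖ ≤ C * t ^ (k+1) * ((1 + ‖x‖) ^ m)⁻¹ := by
  classical
  set A : ℝ := 2 ^ m * (Finset.Iic (m, k+1)).sup (fun p => SchwartzMap.seminorm ℝ p.1 p.2) η with hAdef
  have hA : ∀ z : Eu n, (1 + ‖z‖) ^ m * ‖iteratedFDeriv ℝ (k+1) (⇑η) z‖ ≤ A :=
    fun z => one_add_le_sup_seminorm_apply (𝕜 := ℝ) (m := (m, k+1)) le_rfl le_rfl η z
  have hA0 : 0 ≤ A := le_trans (by positivity) (hA 0)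
  set Kb : ℕ := k+1+m+(n+1) with hKbdef
  set B : ℝ := 2 ^ Kb * (Finset.Iic (Kb, 0)).sup (fun p => SchwartzMap.seminorm ℝ p.1 p.2) ψ with hBdef
  have hB : ∀ y : Eu n, (1 + ‖y‖) ^ Kb * ‖ψ y‖ ≤ B := by
    intro y
    have := one_add_le_sup_seminorm_apply (𝕜 := ℝ) (m := (Kb, 0)) le_rfl le_rfl ψ y
    rwa [norm_iteratedFDeriv_zero] at this
  have hB0 : 0 ≤ B := le_trans (by positivity) (hB 0)
  have hone : ∀ y : Eu n, (1:ℝ) ≤ 1 + ‖y‖ := fun y => by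
    have := norm_nonneg y; linarith
  have hIv : Integrable (fun y : Eu n => ((1 + ‖y‖) ^ (n+1:ℕ))⁻¹) := by
    have h1 : ((Module.finrank ℝ (Eu n) : ℝ)) < ((n+1:ℕ):ℝ) := by
      rw [finrank_euclideanSpace_fin]; exact_mod_cast lt_add_one n
    have h2 := integrable_one_add_norm (E := Eu n) (μ := volume) (r := ((n+1:ℕ):ℝ)) h1
    have h3 : (fun y : Eu n => (1 + ‖y‖) ^ (-(((n+1:ℕ)):ℝ)))
        = fun y : Eu n => ((1 + ‖y‖) ^ (n+1:ℕ))⁻¹ := by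
      funext y
      rw [Real.rpow_neg (by positivity), Real.rpow_natCast]
    rwa [h3] at h2
  set Iv : ℝ := ∫ y : Eu n, ((1 + ‖y‖) ^ (n+1:ℕ))⁻¹ with hIvdef
  have hIv0 : 0 ≤ Iv := integral_nonneg (fun y => by positivity)
  refine ⟨A * B * 2 ^ m / k.factorial * Iv, by positivity, ?_⟩
  intro t ht ht1 x
  set w : Eu n → Eu n := fun y => -(t • y) with hwdef
  have hwnorm : ∀ y, ‖w y‖ = t * ‖y‖ := fun y => by
    rw [hwdef]; simp [norm_smul, abs_of_pos ht]
  -- step 1 : change of variables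
  have cov : cnv n ⇑η (dil n ⇑ψ t) x = ∫ y : Eu n, η (x - t • y) * ψ y := by
    have htn : (t ^ n : ℝ) ≠ 0 := pow_ne_zero n ht.ne'
    have e1 : ∀ y : Eu n, η (x - y) * dil n (⇑ψ) t y
        = ((t ^ n : ℝ) : ℂ)⁻¹ * ((fun z => η (x - t • z) * ψ z) (t⁻¹ • y)) := by
      intro y
      simp only [dil, smul_smul, mul_inv_cancel₀ ht.ne', one_smul]
      ring
    rw [cnv, integral_congr_ae (Filter.Eventually.of_forall e1), integral_const_mul,
      Measure.integral_comp_inv_smul_of_nonneg volume (fun z => η (x - t • z) * ψ z) ht.le,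
      finrank_euclideanSpace_fin]
    rw [Complex.real_smul, ← mul_assoc,
      inv_mul_cancel₀ (Complex.ofReal_ne_zero.mpr htn), one_mul]
  -- Taylor polynomial and remainder
  set P : Eu n → ℂ := fun y => ∑ j ∈ Finset.range (k+1),
    ((j.factorial : ℝ))⁻¹ • (iteratedFDeriv ℝ j (⇑η) x fun _ => w y) with hPdef
  set R : Eu n → ℂ := fun y => η (x - t • y) - P y with hRdef
  have hTay : ∀ y : Eu n, R y = ∫ s in (0:ℝ)..1,
      (((1-s)^k / (k.factorial : ℝ)) • iteratedFDeriv ℝ (k+1) (⇑η) (x + s • w y) (fun _ => w y)) := by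
    intro y
    have h0 := taylorC (fun j s => iteratedFDeriv ℝ j (⇑η) (x + s • w y) (fun _ => w y))
      (fun j s => derivFamily n η x (w y) j s) k
    simp only [iteratedFDeriv_zero_apply, one_smul, zero_smul, add_zero] at h0
    have hx1 : x + w y = x - t • y := by rw [hwdef]; abel
    rw [hx1] at h0
    rw [hRdef]
    simp only [hPdef]
    rw [h0]
    ring
  -- remainder bound given a uniform bound on the derivative along the segment
  have hRD : ∀ (y : Eu n) (S : ℝ), 0 ≤ S →
      (∀ s : ℝ, s ∈ Set.uIoc (0:ℝ) 1 → ‖iteratedFDeriv ℝ (k+1) (⇑η) (x + s • w y)‖ ≤ S) →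
      ‖R y‖ ≤ (t * ‖y‖) ^ (k+1) / k.factorial * S := by
    intro y S hS hbound
    rw [hTay y]
    have hle := intervalIntegral.norm_integral_le_of_norm_le_const
      (C := 1 / k.factorial * (S * (t * ‖y‖) ^ (k+1)))
      (f := fun s => ((1-s)^k / (k.factorial : ℝ)) •
        iteratedFDeriv ℝ (k+1) (⇑η) (x + s • w y) (fun _ => w y))
      (a := 0) (b := 1) ?_
    · calc ‖_‖ ≤ 1 / k.factorial * (S * (t * ‖y‖) ^ (k+1)) * |1 - (0:ℝ)| := hle
        _ = (t * ‖y‖) ^ (k+1) / k.factorial * S := by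
          rw [show |1 - (0:ℝ)| = 1 by norm_num]; ring
    · intro s hs
      have hs' : s ∈ Set.Ioc (0:ℝ) 1 := by
        rwa [Set.uIoc_of_le (by norm_num : (0:ℝ) ≤ 1)] at hs
      have hs0 : 0 ≤ 1 - s := by linarith [hs'.2]
      have hs1 : 1 - s ≤ 1 := by linarith [hs'.1]
      rw [norm_smul]
      have e1 : ‖(1-s)^k / (k.factorial : ℝ)‖ ≤ 1 / k.factorial := by
        rw [Real.norm_eq_abs, abs_of_nonneg (by positivity)]
        gcongr
        exact pow_le_one₀ hs0 hs1
      have e2 : ‖iteratedFDeriv ℝ (k+1) (⇑η) (x + s • w y) (fun _ => w y)‖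
          ≤ S * (t * ‖y‖) ^ (k+1) := by
        calc ‖iteratedFDeriv ℝ (k+1) (⇑η) (x + s • w y) (fun _ => w y)‖
            ≤ ‖iteratedFDeriv ℝ (k+1) (⇑η) (x + s • w y)‖ * ∏ _i : Fin (k+1), ‖w y‖ :=
              (iteratedFDeriv ℝ (k+1) (⇑η) (x + s • w y)).le_opNorm _
          _ = ‖iteratedFDeriv ℝ (k+1) (⇑η) (x + s • w y)‖ * (t * ‖y‖) ^ (k+1) := by
              rw [Finset.prod_const, Finset.card_univ, Fintype.card_fin, hwnorm y]
          _ ≤ S * (t * ‖y‖) ^ (k+1) := by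
              apply mul_le_mul_of_nonneg_right (hbound s hs) (by positivity)
      exact mul_le_mul e1 e2 (norm_nonneg _) (by positivity)
  -- the pointwise bound on R y * ψ y
  have hyb : ∀ y : Eu n, ‖R y * ψ y‖
      ≤ A * B * 2 ^ m / k.factorial * t ^ (k+1) / (1 + ‖x‖) ^ m / (1 + ‖y‖) ^ (n+1:ℕ) := by
    intro y
    have hx1 : (1:ℝ) ≤ 1 + ‖x‖ := by have := norm_nonneg x; linarith
    have hxm : (0:ℝ) < (1 + ‖x‖) ^ m := by positivity
    have hym : (0:ℝ) < (1 + ‖y‖) ^ (n+1:ℕ) := by positivity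
    rw [norm_mul]
    by_cases hc : t * ‖y‖ ≤ ‖x‖ / 2
    · -- region 1
      have hS : ∀ s : ℝ, s ∈ Set.uIoc (0:ℝ) 1 →
          ‖iteratedFDeriv ℝ (k+1) (⇑η) (x + s • w y)‖ ≤ A * 2 ^ m / (1 + ‖x‖) ^ m := by
        intro s hs
        have hs' : s ∈ Set.Ioc (0:ℝ) 1 := by
          rwa [Set.uIoc_of_le (by norm_num : (0:ℝ) ≤ 1)] at hs
        set z := x + s • w y with hzdef
        have hz : ‖x‖ / 2 ≤ ‖z‖ := by
          have h1 : ‖x‖ ≤ ‖z‖ + ‖s • w y‖ := by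
            have := norm_add_le z (-(s • w y))
            simpa [hzdef] using this
          have h2 : ‖s • w y‖ ≤ t * ‖y‖ := by
            rw [norm_smul, Real.norm_eq_abs, abs_of_pos hs'.1, hwnorm y]
            nlinarith [hs'.2, mul_nonneg ht.le (norm_nonneg y)]
          linarith
        have hp : (1 + ‖x‖) ^ m ≤ 2 ^ m * (1 + ‖z‖) ^ m := by
          rw [← mul_pow]
          exact pow_le_pow_left₀ (by positivity) (by linarith) m
        have hzm : (0:ℝ) < (1 + ‖z‖) ^ m := by positivity
        rw [le_div_iff₀ hxm]
        nlinarith [mul_le_mul_of_nonneg_left hp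
            (norm_nonneg (iteratedFDeriv ℝ (k+1) (⇑η) z)),
          mul_le_mul_of_nonneg_left (hA z) (pow_nonneg (by norm_num : (0:ℝ) ≤ 2) m)]
      have hRy := hRD y _ (by positivity) hS
      have hBy : ‖y‖ ^ (k+1) * ‖ψ y‖ ≤ B / (1 + ‖y‖) ^ (n+1:ℕ) := by
        rw [le_div_iff₀ hym]
        calc ‖y‖ ^ (k+1) * ‖ψ y‖ * (1 + ‖y‖) ^ (n+1:ℕ)
            ≤ (1 + ‖y‖) ^ (k+1) * ‖ψ y‖ * (1 + ‖y‖) ^ (n+1:ℕ) := by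
              gcongr
              · linarith [norm_nonneg y]
          _ = (1 + ‖y‖) ^ (k+1+(n+1)) * ‖ψ y‖ := by rw [pow_add]; ring
          _ ≤ (1 + ‖y‖) ^ Kb * ‖ψ y‖ := by
              apply mul_le_mul_of_nonneg_right _ (norm_nonneg _)
              exact pow_le_pow_right₀ (hone y) (by omega)
          _ ≤ B := hB y
      have hpre : (0:ℝ) ≤ A * 2 ^ m / (k.factorial:ℝ) * t ^ (k+1) / (1 + ‖x‖) ^ m := by
        apply div_nonneg _ hxm.le
        apply mul_nonneg _ (by positivity)
        apply div_nonneg (mul_nonneg hA0 (by positivity)) (by positivity)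
      calc ‖R y‖ * ‖ψ y‖
          ≤ ((t * ‖y‖) ^ (k+1) / k.factorial * (A * 2 ^ m / (1 + ‖x‖) ^ m)) * ‖ψ y‖ :=
            mul_le_mul_of_nonneg_right hRy (norm_nonneg _)
        _ = A * 2 ^ m / (k.factorial:ℝ) * t ^ (k+1) / (1 + ‖x‖) ^ m * (‖y‖ ^ (k+1) * ‖ψ y‖) := by
            rw [mul_pow]; ring
        _ ≤ A * 2 ^ m / (k.factorial:ℝ) * t ^ (k+1) / (1 + ‖x‖) ^ m * (B / (1 + ‖y‖) ^ (n+1:ℕ)) :=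
            mul_le_mul_of_nonneg_left hBy hpre
        _ = A * B * 2 ^ m / k.factorial * t ^ (k+1) / (1 + ‖x‖) ^ m / (1 + ‖y‖) ^ (n+1:ℕ) := by
            ring
    · -- region 2
      push_neg at hc
      have hS : ∀ s : ℝ, s ∈ Set.uIoc (0:ℝ) 1 →
          ‖iteratedFDeriv ℝ (k+1) (⇑η) (x + s • w y)‖ ≤ A := by
        intro s hs
        set z := x + s • w y
        have h1 : (1:ℝ) ≤ (1 + ‖z‖) ^ m :=
          one_le_pow₀ (by linarith [norm_nonneg z])
        nlinarith [hA z, norm_nonneg (iteratedFDeriv ℝ (k+1) (⇑η) z)]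
      have hRy := hRD y A hA0 hS
      have hyx : ‖x‖ ≤ 2 * ‖y‖ := by
        have : t * ‖y‖ ≤ ‖y‖ := by nlinarith [norm_nonneg y]
        linarith
      have hp : (1 + ‖x‖) ^ m ≤ 2 ^ m * (1 + ‖y‖) ^ m := by
        rw [← mul_pow]
        exact pow_le_pow_left₀ (by positivity) (by linarith) m
      have hBy : ‖y‖ ^ (k+1) * ‖ψ y‖ ≤ B * 2 ^ m / ((1 + ‖x‖) ^ m * (1 + ‖y‖) ^ (n+1:ℕ)) := by
        rw [le_div_iff₀ (by positivity)]
        calc ‖y‖ ^ (k+1) * ‖ψ y‖ * ((1 + ‖x‖) ^ m * (1 + ‖y‖) ^ (n+1:ℕ))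
            ≤ (1 + ‖y‖) ^ (k+1) * ‖ψ y‖ * ((2 ^ m * (1 + ‖y‖) ^ m) * (1 + ‖y‖) ^ (n+1:ℕ)) := by
              gcongr
              · linarith [norm_nonneg y]
          _ = 2 ^ m * ((1 + ‖y‖) ^ (k+1+m+(n+1)) * ‖ψ y‖) := by rw [pow_add, pow_add]; ring
          _ ≤ 2 ^ m * B := by
              rw [← hKbdef]
              exact mul_le_mul_of_nonneg_left (hB y) (by positivity)
          _ = B * 2 ^ m := by ring
      have hpre : (0:ℝ) ≤ A / (k.factorial:ℝ) * t ^ (k+1) := by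
        apply mul_nonneg (div_nonneg hA0 (by positivity)) (by positivity)
      calc ‖R y‖ * ‖ψ y‖
          ≤ ((t * ‖y‖) ^ (k+1) / k.factorial * A) * ‖ψ y‖ :=
            mul_le_mul_of_nonneg_right hRy (norm_nonneg _)
        _ = A / (k.factorial:ℝ) * t ^ (k+1) * (‖y‖ ^ (k+1) * ‖ψ y‖) := by
            rw [mul_pow]; ring
        _ ≤ A / (k.factorial:ℝ) * t ^ (k+1)
              * (B * 2 ^ m / ((1 + ‖x‖) ^ m * (1 + ‖y‖) ^ (n+1:ℕ))) :=
            mul_le_mul_of_nonneg_left hBy hpre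
        _ = A * B * 2 ^ m / k.factorial * t ^ (k+1) / (1 + ‖x‖) ^ m / (1 + ‖y‖) ^ (n+1:ℕ) := by
            field_simp
  -- continuity of P and R
  have hwcont : Continuous w := by
    rw [hwdef]; exact (continuous_id.const_smul t).neg
  have hPcont : Continuous P := by
    rw [hPdef]
    apply continuous_finset_sum
    intro j _
    exact (((iteratedFDeriv ℝ j (⇑η) x).coe_continuous.comp
      (continuous_pi fun _ => hwcont) : Continuous fun y => iteratedFDeriv ℝ j (⇑η) x fun _ => w y).const_smul ((j.factorial:ℝ))⁻¹)
  have hRcont : Continuous R := by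
    rw [hRdef]
    exact ((η.continuous.comp (continuous_const.sub (continuous_id.const_smul t))).sub hPcont)
  -- integrability of R * ψ
  set c0 : ℝ := A * B * 2 ^ m / k.factorial * t ^ (k+1) / (1 + ‖x‖) ^ m with hc0def
  have hc00 : 0 ≤ c0 := by
    apply div_nonneg _ (by positivity)
    apply mul_nonneg _ (by positivity)
    apply div_nonneg _ (by positivity)
    exact mul_nonneg (mul_nonneg hA0 hB0) (by positivity)
  have hybc : ∀ y : Eu n, ‖R y * ψ y‖ ≤ c0 * ((1 + ‖y‖) ^ (n+1:ℕ))⁻¹ := by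
    intro y
    rw [← div_eq_mul_inv]
    exact hyb y
  have hInt : Integrable (fun y : Eu n => R y * ψ y) := by
    refine (hIv.const_mul c0).mono' ((hRcont.mul ψ.continuous).aestronglyMeasurable) ?_
    filter_upwards with y using hybc y
  have hPint : ∀ j ∈ Finset.range (k+1), Integrable (fun y : Eu n =>
      (((j.factorial:ℝ))⁻¹ • (iteratedFDeriv ℝ j (⇑η) x fun _ => w y)) * ψ y) := by
    intro j _
    apply integrable_polymul n j ψ _ (‖iteratedFDeriv ℝ j (⇑η) x‖)
    · exact ((iteratedFDeriv ℝ j (⇑η) x).coe_continuous.comp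
        (continuous_pi fun _ => hwcont) : Continuous fun y => iteratedFDeriv ℝ j (⇑η) x fun _ => w y).const_smul ((j.factorial:ℝ))⁻¹
    · intro y
      rw [norm_smul]
      have h1 : ‖((j.factorial:ℝ))⁻¹‖ ≤ 1 := by
        rw [Real.norm_eq_abs, abs_of_nonneg (by positivity)]
        exact inv_le_one_of_one_le₀ (Nat.one_le_cast.2 j.factorial_pos)
      have h2 : ‖iteratedFDeriv ℝ j (⇑η) x fun _ => w y‖
          ≤ ‖iteratedFDeriv ℝ j (⇑η) x‖ * ‖y‖ ^ j := by
        calc ‖iteratedFDeriv ℝ j (⇑η) x fun _ => w y‖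
            ≤ ‖iteratedFDeriv ℝ j (⇑η) x‖ * ∏ _i : Fin j, ‖w y‖ :=
              (iteratedFDeriv ℝ j (⇑η) x).le_opNorm _
          _ = ‖iteratedFDeriv ℝ j (⇑η) x‖ * (t * ‖y‖) ^ j := by
              rw [Finset.prod_const, Finset.card_univ, Fintype.card_fin, hwnorm y]
          _ ≤ ‖iteratedFDeriv ℝ j (⇑η) x‖ * ‖y‖ ^ j := by
              apply mul_le_mul_of_nonneg_left _ (norm_nonneg _)
              apply pow_le_pow_left₀ (by positivity)
              nlinarith [norm_nonneg y]
      calc ‖((j.factorial:ℝ))⁻¹‖ * ‖iteratedFDeriv ℝ j (⇑η) x fun _ => w y‖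
          ≤ 1 * (‖iteratedFDeriv ℝ j (⇑η) x‖ * ‖y‖ ^ j) :=
            mul_le_mul h1 h2 (norm_nonneg _) zero_le_one
        _ = ‖iteratedFDeriv ℝ j (⇑η) x‖ * ‖y‖ ^ j := one_mul _
  have hPsum : ∀ y : Eu n, P y * ψ y = ∑ j ∈ Finset.range (k+1),
      ((((j.factorial:ℝ))⁻¹ • (iteratedFDeriv ℝ j (⇑η) x fun _ => w y)) * ψ y) := by
    intro y
    rw [hPdef]
    simp only [Finset.sum_mul]
  have hPψint : Integrable (fun y : Eu n => P y * ψ y) := by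
    rw [show (fun y : Eu n => P y * ψ y) = fun y => ∑ j ∈ Finset.range (k+1),
      ((((j.factorial:ℝ))⁻¹ • (iteratedFDeriv ℝ j (⇑η) x fun _ => w y)) * ψ y) from
      funext hPsum]
    exact integrable_finset_sum _ hPint
  have hPzero : ∫ y : Eu n, P y * ψ y = 0 := by
    rw [integral_congr_ae (Filter.Eventually.of_forall hPsum),
      integral_finset_sum _ hPint]
    apply Finset.sum_eq_zero
    intro j hj
    have e : ∀ y : Eu n, (((j.factorial:ℝ))⁻¹ • (iteratedFDeriv ℝ j (⇑η) x fun _ => w y)) * ψ y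
        = ((j.factorial:ℝ)⁻¹ * (-t)^j) • (((iteratedFDeriv ℝ j (⇑η) x) fun _ => y) * ψ y) := by
      intro y
      have hwy : (fun _ : Fin j => w y) = fun _ : Fin j => (-t) • y := by
        funext i; rw [hwdef]; exact (neg_smul t y).symm
      rw [hwy]
      rw [show (iteratedFDeriv ℝ j (⇑η) x fun _ : Fin j => (-t) • y)
          = ((∏ _i : Fin j, (-t)) • (iteratedFDeriv ℝ j (⇑η) x fun _ : Fin j => y)) from
        MultilinearMap.map_smul_univ (iteratedFDeriv ℝ j (⇑η) x).toMultilinearMap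
          (fun _ => -t) (fun _ => y)]
      rw [Finset.prod_const, Finset.card_univ, Fintype.card_fin, smul_smul, smul_mul_assoc]
    rw [integral_congr_ae (Filter.Eventually.of_forall e), integral_smul,
      momVanish n k ψ hψ j (Nat.lt_succ_iff.1 (Finset.mem_range.1 hj)) _, smul_zero]
  rw [cov]
  have esplit : ∀ y : Eu n, η (x - t • y) * ψ y = P y * ψ y + R y * ψ y := by
    intro y
    rw [hRdef]
    ring
  rw [integral_congr_ae (Filter.Eventually.of_forall esplit),
    integral_add hPψint hInt, hPzero, zero_add]
  calc ‖∫ y : Eu n, R y * ψ y‖ ≤ ∫ y : Eu n, c0 * ((1 + ‖y‖) ^ (n+1:ℕ))⁻¹ :=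
        norm_integral_le_of_norm_le (hIv.const_mul c0)
          (Filter.Eventually.of_forall hybc)
    _ = c0 * Iv := by rw [integral_const_mul, hIvdef]
    _ = A * B * 2 ^ m / k.factorial * Iv * t ^ (k+1) * ((1 + ‖x‖) ^ m)⁻¹ := by
        rw [hc0def, div_eq_mul_inv (A * B * 2 ^ m / ↑k.factorial * t ^ (k + 1))]
        ring

lemma integrable_jap (n : ℕ) :
    Integrable (fun y : Eu n => ((1 + ‖y‖) ^ (n+1:ℕ))⁻¹) := by
  have h1 : ((Module.finrank ℝ (Eu n) : ℝ)) < ((n+1:ℕ):ℝ) := by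
    rw [finrank_euclideanSpace_fin]; exact_mod_cast lt_add_one n
  have h2 := integrable_one_add_norm (E := Eu n) (μ := volume) (r := ((n+1:ℕ):ℝ)) h1
  have h3 : (fun y : Eu n => (1 + ‖y‖) ^ (-(((n+1:ℕ)):ℝ)))
      = fun y : Eu n => ((1 + ‖y‖) ^ (n+1:ℕ))⁻¹ := by
    funext y
    rw [Real.rpow_neg (by positivity), Real.rpow_natCast]
  rwa [h3] at h2

lemma main_lemma (n : ℕ) (b N : ℝ) (hb : 0 ≤ b) (hN : 0 ≤ N) (k : ℕ)
    (hk : b ≤ (k : ℝ) + 1) (η ψ : 𝓢(Eu n, ℂ)) (hψ : momZero n k ⇑ψ) :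
    (⨆ (t : ℝ) (_ : 0 < t) (_ : t ≤ 1),
        ENNReal.ofReal (t ^ (-b)) * Cq n ⇑η ⇑ψ t N) < ⊤ := by
  obtain ⟨C, hC0, hC⟩ := pointwise_bound n k η ψ hψ (⌈N⌉₊ + (n+1))
  set V : ℝ≥0∞ := ∫⁻ x : Eu n, ENNReal.ofReal (((1 + ‖x‖) ^ (n+1:ℕ))⁻¹) with hVdef
  have hV : V < ⊤ := (integrable_jap n).lintegral_lt_top
  refine lt_of_le_of_lt ?_ (ENNReal.mul_lt_top (show ENNReal.ofReal C < ⊤ from ENNReal.ofReal_lt_top) hV)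
  refine iSup_le fun t => iSup_le fun ht => iSup_le fun ht1 => ?_
  have hx1 : ∀ x : Eu n, (1:ℝ) ≤ 1 + ‖x‖ := fun x => by
    have := norm_nonneg x; linarith
  have hpt : ∀ x : Eu n, ENNReal.ofReal ((1 + ‖x‖) ^ N) * (‖cnv n ⇑η (dil n ⇑ψ t) x‖₊ : ℝ≥0∞)
      ≤ ENNReal.ofReal ((C * t ^ (k+1)) * ((1 + ‖x‖) ^ (n+1:ℕ))⁻¹) := by
    intro x
    rw [← enorm_eq_nnnorm, ← ofReal_norm, ← ENNReal.ofReal_mul (by positivity)]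
    apply ENNReal.ofReal_le_ofReal
    have hpos : (0:ℝ) ≤ (1 + ‖x‖) ^ N := Real.rpow_nonneg (by positivity) N
    calc (1 + ‖x‖) ^ N * ‖cnv n ⇑η (dil n ⇑ψ t) x‖
        ≤ (1 + ‖x‖) ^ N * (C * t ^ (k+1) * ((1 + ‖x‖) ^ (⌈N⌉₊ + (n+1)))⁻¹) :=
          mul_le_mul_of_nonneg_left (hC t ht ht1 x) hpos
      _ ≤ (1 + ‖x‖) ^ (⌈N⌉₊:ℕ) * (C * t ^ (k+1) * ((1 + ‖x‖) ^ (⌈N⌉₊ + (n+1)))⁻¹) := by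
          apply mul_le_mul_of_nonneg_right _ (by positivity)
          rw [← Real.rpow_natCast (1 + ‖x‖) ⌈N⌉₊]
          exact Real.rpow_le_rpow_of_exponent_le (hx1 x) (Nat.le_ceil N)
      _ = (C * t ^ (k+1)) * ((1 + ‖x‖) ^ (n+1:ℕ))⁻¹ := by
          rw [pow_add]
          have h1 : ((1 + ‖x‖) ^ (⌈N⌉₊:ℕ)) ≠ 0 := by positivity
          have h2 : ((1 + ‖x‖) ^ (n+1:ℕ)) ≠ 0 := by positivity
          field_simp
          ring
  have hCq : Cq n ⇑η ⇑ψ t N ≤ ENNReal.ofReal (C * t ^ (k+1)) * V := by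
    calc Cq n ⇑η ⇑ψ t N
        ≤ ∫⁻ x : Eu n, ENNReal.ofReal ((C * t ^ (k+1)) * ((1 + ‖x‖) ^ (n+1:ℕ))⁻¹) :=
          lintegral_mono hpt
      _ = ∫⁻ x : Eu n, ENNReal.ofReal (C * t ^ (k+1))
            * ENNReal.ofReal (((1 + ‖x‖) ^ (n+1:ℕ))⁻¹) := by
          apply lintegral_congr
          intro x
          rw [← ENNReal.ofReal_mul (by positivity)]
      _ = ENNReal.ofReal (C * t ^ (k+1)) * V :=
          lintegral_const_mul' _ _ ENNReal.ofReal_ne_top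
  calc ENNReal.ofReal (t ^ (-b)) * Cq n ⇑η ⇑ψ t N
      ≤ ENNReal.ofReal (t ^ (-b)) * (ENNReal.ofReal (C * t ^ (k+1)) * V) :=
        mul_le_mul_right hCq _
    _ = ENNReal.ofReal (t ^ (-b) * (C * t ^ (k+1))) * V := by
        rw [← mul_assoc, ← ENNReal.ofReal_mul (Real.rpow_nonneg ht.le _)]
    _ ≤ ENNReal.ofReal C * V := by
        apply mul_le_mul_left
        apply ENNReal.ofReal_le_ofReal
        have h1 : t ^ (-b) * t ^ (k+1:ℕ) ≤ 1 := by
          rw [← Real.rpow_natCast t (k+1), ← Real.rpow_add ht]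
          apply Real.rpow_le_one ht.le ht1
          push_cast
          linarith
        calc t ^ (-b) * (C * t ^ (k+1)) = C * (t ^ (-b) * t ^ (k+1:ℕ)) := by ring
          _ ≤ C * 1 := mul_le_mul_of_nonneg_left h1 hC0
          _ = C := mul_one C


/-- Euclidean case of Remark 4.4(2). -/
theorem stmt_4 (n : ℕ) (b N : ℝ) (hb : 0 ≤ b) (hN : 0 ≤ N) (k : ℕ)
    (hk : b ≤ (k : ℝ) + 1) (η ψ : 𝓢(Eu n, ℂ)) (hψ : momZero n k ⇑ψ) :
    ((⨆ (t : ℝ) (_ : 0 < t) (_ : t ≤ 1),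
        ENNReal.ofReal (t ^ (-b)) * Cq n ⇑η ⇑ψ t N) < ⊤) ∧
      (∀ η' ψ' : 𝓢(Eu n, ℂ), (∫ x, ψ' x = 0) → ∃ ε : ℝ, 0 < ε ∧
        ∀ N' : ℝ, 0 ≤ N' →
          (⨆ (t : ℝ) (_ : 0 < t) (_ : t ≤ 1),
            ENNReal.ofReal (t ^ (-ε)) * Cq n ⇑η' ⇑ψ' t N') < ⊤) := by
  constructor
  · exact main_lemma n b N hb hN k hk η ψ hψ
  · intro η' ψ' hψ'
    refine ⟨1, one_pos, fun N' hN' => ?_⟩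
    apply main_lemma n 1 N' zero_le_one hN' 0 (by norm_num) η' ψ'
    intro I hI
    have hI0 : ∀ i, I i = 0 := by
      intro i
      have := (Finset.sum_eq_zero_iff_of_nonneg (fun _ _ => Nat.zero_le _)).mp
        (Nat.le_zero.mp hI) i (Finset.mem_univ i)
      exact this
    simp only [hI0, pow_zero, Finset.prod_const_one, mul_one]
    exact hψ'

end
end

section
/- Let F : ℝⁿ → ℂ be continuously differentiable, let r > 0 and set N = n/r. Then there is a constant C_r (depending only on n and r) such that for every 0 < u ≤ 1 and every x ∈ ℝⁿ: F**_{N,1}(x) ≤ C_r u^{-N} (M(|F|^r)(x))^{1/r} + C_r u Σ_{j=1}^n (∂_j F)**_{N,1}(x), where ∂_j F denotes the j-th partial derivative of F. -/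
open MeasureTheory Metric SchwartzMap
open scoped ENNReal

noncomputable section

lemma opnorm_le_sum {n : ℕ} (L : Eu n →L[ℝ] ℂ) :
    ‖L‖ ≤ ∑ j : Fin n, ‖L (EuclideanSpace.single j 1)‖ := by
  refine L.opNorm_le_bound (Finset.sum_nonneg fun j _ => norm_nonneg _) fun v => ?_
  have hv : v = ∑ j : Fin n, (v j) • EuclideanSpace.single j (1:ℝ) := by
    have := (EuclideanSpace.basisFun (Fin n) ℝ).sum_repr v
    simpa [EuclideanSpace.basisFun_apply, EuclideanSpace.basisFun_repr] using this.symm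
  calc ‖L v‖ = ‖∑ j : Fin n, (v j) • L (EuclideanSpace.single j 1)‖ := by
        conv_lhs => rw [hv]
        simp [map_sum, _root_.map_smul]
    _ ≤ ∑ j : Fin n, ‖(v j) • L (EuclideanSpace.single j 1)‖ := norm_sum_le _ _
    _ ≤ ∑ j : Fin n, ‖L (EuclideanSpace.single j 1)‖ * ‖v‖ := by
        refine Finset.sum_le_sum fun j _ => ?_
        rw [norm_smul]
        have h1 : |v j| ≤ ‖v‖ := by
          have h2 : (v j : ℝ) = inner ℝ (EuclideanSpace.single j (1:ℝ)) v := by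
            rw [EuclideanSpace.inner_single_left]; simp
          calc |v j| = |inner ℝ (EuclideanSpace.single j (1:ℝ)) v| := by rw [h2]
            _ ≤ ‖EuclideanSpace.single j (1:ℝ)‖ * ‖v‖ := abs_real_inner_le_norm _ _
            _ = ‖v‖ := by rw [EuclideanSpace.norm_single]; simp
        calc ‖v j‖ * ‖L (EuclideanSpace.single j 1)‖
            ≤ ‖v‖ * ‖L (EuclideanSpace.single j 1)‖ :=
              mul_le_mul_of_nonneg_right h1 (norm_nonneg _)
          _ = ‖L (EuclideanSpace.single j 1)‖ * ‖v‖ := mul_comm _ _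
    _ = (∑ j : Fin n, ‖L (EuclideanSpace.single j 1)‖) * ‖v‖ := by
        rw [Finset.sum_mul]

set_option maxHeartbeats 1000000 in
/-- Euclidean case of Lemma 4.1. -/
theorem stmt_7 (n : ℕ) (r : ℝ) (hr : 0 < r) :
    ∃ C : ℝ, ∀ F : Eu n → ℂ, ContDiff ℝ 1 F →
      ∀ u : ℝ, 0 < u → u ≤ 1 → ∀ x : Eu n,
        peetre n F ((n : ℝ) / r) 1 x ≤
          ENNReal.ofReal (C * u ^ (-((n : ℝ) / r))) *
              (HL n (fun y => ‖F y‖ ^ r) x) ^ (1 / r) +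
            ENNReal.ofReal (C * u) *
              ∑ j : Fin n, peetre n (pd n j F) ((n : ℝ) / r) 1 x := by
  set N : ℝ := (n : ℝ) / r with hNdef
  have hN0 : 0 ≤ N := div_nonneg (Nat.cast_nonneg n) hr.le
  have h2N : (0:ℝ) < (2:ℝ) ^ N := Real.rpow_pos_of_pos two_pos N
  refine ⟨1 + 2 ^ N, ?_⟩
  set C : ℝ := 1 + 2 ^ N with hCdef
  have hC1 : (1:ℝ) ≤ C := by simp only [hCdef]; linarith
  have hC2 : (2:ℝ) ^ N ≤ C := by simp only [hCdef]; linarith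
  have hC0 : (0:ℝ) < C := by linarith
  intro F hF u hu hu1 x
  have huN : (0:ℝ) < u ^ (-N) := Real.rpow_pos_of_pos hu _
  set Q : ℝ≥0∞ := HL n (fun y => ‖F y‖ ^ r) x with hQdef
  set P : ℝ≥0∞ := ∑ j : Fin n, peetre n (pd n j F) N 1 x with hPdef
  rcases eq_or_ne Q ⊤ with hQt | hQt
  · have : Q ^ (1/r) = ⊤ := by
      rw [hQt]; exact ENNReal.top_rpow_of_pos (by positivity)
    rw [this, ENNReal.mul_top (by
      simp only [ne_eq, ENNReal.ofReal_eq_zero, not_le]; positivity)]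
    simp
  rcases eq_or_ne P ⊤ with hPt | hPt
  · rw [hPt, ENNReal.mul_top (by
      simp only [ne_eq, ENNReal.ofReal_eq_zero, not_le]; positivity)]
    simp
  -- main case
  set q : ℝ := Q.toReal with hqdef
  have hq0 : 0 ≤ q := ENNReal.toReal_nonneg
  have hQq : Q = ENNReal.ofReal q := (ENNReal.ofReal_toReal hQt).symm
  set p : Fin n → ℝ := fun j => (peetre n (pd n j F) N 1 x).toReal with hpdef
  have hpj0 : ∀ j, 0 ≤ p j := fun j => ENNReal.toReal_nonneg
  have hpjt : ∀ j : Fin n, peetre n (pd n j F) N 1 x ≠ ⊤ := by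
    intro j
    refine ne_top_of_le_ne_top hPt ?_
    exact Finset.single_le_sum (f := fun j => peetre n (pd n j F) N 1 x)
      (fun i _ => zero_le) (Finset.mem_univ j)
  have hPp : P = ENNReal.ofReal (∑ j, p j) := by
    rw [ENNReal.ofReal_sum_of_nonneg (fun i _ => hpj0 i), hPdef]
    refine Finset.sum_congr rfl fun j _ => ?_
    rw [hpdef]; exact (ENNReal.ofReal_toReal (hpjt j)).symm
  rw [peetre]
  refine iSup_le fun y => ?_
  set z : Eu n := x - y with hz
  -- derivative bounds on the closed ball K
  set K : Set (Eu n) := closedBall z u with hK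
  have hKc : IsCompact K := isCompact_closedBall z u
  have hKne : z ∈ K := mem_closedBall_self hu.le
  have hdiff : Differentiable ℝ F := hF.differentiable one_ne_zero
  -- pointwise bound for derivatives on K
  have hpd : ∀ (j : Fin n), ∀ w ∈ K, ‖pd n j F w‖ ≤ p j * (2 * (1 + ‖y‖)) ^ N := by
    intro j w hw
    have hle : (‖pd n j F (x - (x - w))‖₊ : ℝ≥0∞) /
        ENNReal.ofReal ((1 + 1 * ‖x - w‖) ^ N) ≤ peetre n (pd n j F) N 1 x :=
      le_iSup (fun y' => (‖pd n j F (x - y')‖₊ : ℝ≥0∞) /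
        ENNReal.ofReal ((1 + 1 * ‖y'‖) ^ N)) (x - w)
    rw [sub_sub_cancel] at hle
    have hd0 : ENNReal.ofReal ((1 + 1 * ‖x - w‖) ^ N) ≠ 0 := by
      simp only [ne_eq, ENNReal.ofReal_eq_zero, not_le]; positivity
    have hle2 : (‖pd n j F w‖₊ : ℝ≥0∞) ≤
        peetre n (pd n j F) N 1 x * ENNReal.ofReal ((1 + 1 * ‖x - w‖) ^ N) :=
      (ENNReal.div_le_iff hd0 ENNReal.ofReal_ne_top).mp hle
    have hfin : peetre n (pd n j F) N 1 x * ENNReal.ofReal ((1 + 1 * ‖x - w‖) ^ N) ≠ ⊤ :=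
      ENNReal.mul_ne_top (hpjt j) ENNReal.ofReal_ne_top
    have := ENNReal.toReal_mono hfin hle2
    rw [ENNReal.toReal_mul, ENNReal.coe_toReal, coe_nnnorm,
      ENNReal.toReal_ofReal (by positivity)] at this
    refine this.trans ?_
    have hbase : 1 + 1 * ‖x - w‖ ≤ 2 * (1 + ‖y‖) := by
      have h1 : ‖x - w‖ ≤ ‖x - z‖ + ‖z - w‖ := by
        have : x - w = (x - z) + (z - w) := by abel
        rw [this]; exact norm_add_le _ _
      have h2 : ‖x - z‖ = ‖y‖ := by rw [hz]; simp
      have h3 : ‖z - w‖ ≤ u := by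
        rw [← dist_eq_norm, dist_comm]; exact mem_closedBall.mp hw
      nlinarith [norm_nonneg y]
    have hrp : (1 + 1 * ‖x - w‖) ^ N ≤ (2 * (1 + ‖y‖)) ^ N :=
      Real.rpow_le_rpow (by positivity) hbase hN0
    exact mul_le_mul_of_nonneg_left hrp (hpj0 j)
  -- max of the derivative norm on K
  obtain ⟨w₀, hw₀K, hw₀⟩ := hKc.exists_isMaxOn ⟨z, hKne⟩
    ((hF.continuous_fderiv one_ne_zero).norm.continuousOn)
  set S : ℝ := ‖fderiv ℝ F w₀‖ with hSdef
  have hS0 : 0 ≤ S := norm_nonneg _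
  have hSbound : ∀ w ∈ K, ‖fderiv ℝ F w‖ ≤ S := fun w hw => hw₀ hw
  have hS : S ≤ (2:ℝ) ^ N * (1 + ‖y‖) ^ N * ∑ j, p j := by
    calc S ≤ ∑ j : Fin n, ‖fderiv ℝ F w₀ (EuclideanSpace.single j 1)‖ :=
          opnorm_le_sum _
      _ = ∑ j : Fin n, ‖pd n j F w₀‖ := rfl
      _ ≤ ∑ j : Fin n, p j * (2 * (1 + ‖y‖)) ^ N :=
          Finset.sum_le_sum fun j _ => hpd j w₀ hw₀K
      _ = (2 * (1 + ‖y‖)) ^ N * ∑ j, p j := by rw [← Finset.sum_mul]; ring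
      _ = (2:ℝ) ^ N * (1 + ‖y‖) ^ N * ∑ j, p j := by
          rw [Real.mul_rpow (by norm_num) (by positivity)]
  -- min of ‖F‖ on K
  obtain ⟨w₁, hw₁K, hw₁⟩ := hKc.exists_isMinOn ⟨z, hKne⟩ (hF.continuous.norm.continuousOn)
  set A : ℝ := ‖F w₁‖ with hAdef
  have hA0 : 0 ≤ A := norm_nonneg _
  have hAbound : ∀ w ∈ K, A ≤ ‖F w‖ := fun w hw => hw₁ hw
  -- mean value estimate
  have hFz : ‖F z‖ ≤ A + S * u := by
    have hmv : ‖F z - F w₁‖ ≤ S * ‖z - w₁‖ :=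
      (convex_closedBall z u).norm_image_sub_le_of_norm_fderiv_le
        (fun w _ => hdiff w) hSbound hw₁K hKne
    have h3 : ‖z - w₁‖ ≤ u := by
      rw [← dist_eq_norm]; exact mem_closedBall'.mp hw₁K
    calc ‖F z‖ ≤ ‖F w₁‖ + ‖F z - F w₁‖ := by
          have := norm_sub_norm_le (F z) (F w₁); linarith [abs_le.mp (abs_norm_sub_norm_le (F z) (F w₁))]
      _ ≤ A + S * ‖z - w₁‖ := by rw [hAdef]; linarith
      _ ≤ A + S * u := by nlinarith
  -- averaging estimate for A
  have hAq : A ^ r * u ^ n ≤ (1 + ‖y‖) ^ n * q := by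
    set ρ₂ : ℝ := ‖y‖ + u with hρ₂
    have hρ₂0 : 0 < ρ₂ := by positivity
    have hxB : x ∈ ball x ρ₂ := mem_ball_self hρ₂0
    have hsub : ball z u ⊆ ball x ρ₂ := by
      intro w hw
      rw [mem_ball] at hw ⊢
      have : dist w x ≤ dist w z + dist z x := dist_triangle _ _ _
      have hzx : dist z x = ‖y‖ := by rw [dist_eq_norm, hz]; simp
      rw [hρ₂]; linarith
    have hQge : (volume (ball x ρ₂))⁻¹ * ∫⁻ w in ball x ρ₂,
        ENNReal.ofReal (‖F w‖ ^ r) ≤ Q := by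
      rw [hQdef, HL]
      exact le_iSup_of_le x (le_iSup_of_le ρ₂ (le_iSup_of_le hxB le_rfl))
    have hBt : volume (ball x ρ₂) ≠ ⊤ := measure_ball_lt_top.ne
    have hB0 : volume (ball x ρ₂) ≠ 0 := (measure_ball_pos volume x hρ₂0).ne'
    have hst : volume (ball z u) ≠ ⊤ := measure_ball_lt_top.ne
    have hs0 : volume (ball z u) ≠ 0 := (measure_ball_pos volume z hu).ne'
    have hI : ∫⁻ w in ball x ρ₂, ENNReal.ofReal (‖F w‖ ^ r) ≤ volume (ball x ρ₂) * Q := by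
      have := mul_le_mul_right hQge (volume (ball x ρ₂))
      rwa [← mul_assoc, ENNReal.mul_inv_cancel hB0 hBt, one_mul] at this
    have hlow : ENNReal.ofReal (A ^ r) * volume (ball z u) ≤
        ∫⁻ w in ball x ρ₂, ENNReal.ofReal (‖F w‖ ^ r) := by
      have h1 : ENNReal.ofReal (A ^ r) * volume (ball z u) =
          ∫⁻ _ in ball z u, ENNReal.ofReal (A ^ r) := (setLIntegral_const _ _).symm
      rw [h1]
      refine le_trans (setLIntegral_mono ?_ ?_) (lintegral_mono_set hsub)
      · exact (ENNReal.measurable_ofReal.comp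
          ((hF.continuous.norm.measurable).pow_const r))
      · intro w hw
        refine ENNReal.ofReal_le_ofReal ?_
        exact Real.rpow_le_rpow hA0 (hAbound w (ball_subset_closedBall hw)) hr.le
    have hmain : ENNReal.ofReal (A ^ r) * volume (ball z u) ≤ volume (ball x ρ₂) * Q :=
      hlow.trans hI
    have hun : (0:ℝ) < u ^ n := by positivity
    have hratio : volume (ball x ρ₂) ≤
        ENNReal.ofReal ((1 + ‖y‖) ^ n / u ^ n) * volume (ball z u) := by
      rcases Nat.eq_zero_or_pos n with hn | hn
      · subst hn
        have hballeq : ∀ (c : Eu 0) (ρ : ℝ), 0 < ρ → ball c ρ = Set.univ := by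
          intro c ρ hρ
          refine Set.eq_univ_iff_forall.mpr fun w => ?_
          rw [mem_ball, EuclideanSpace.dist_eq]
          simpa using hρ
        rw [hballeq z u hu, hballeq x ρ₂ hρ₂0]
        simp
      · haveI : Nontrivial (Eu n) := Module.nontrivial_of_finrank_pos (R := ℝ)
          (by rw [finrank_euclideanSpace_fin]; omega)
        have hvol : ∀ (c : Eu n) (ρ : ℝ), 0 ≤ ρ →
            volume (ball c ρ) = ENNReal.ofReal (ρ ^ n) *
              volume (ball (0 : Eu n) 1) := by
          intro c ρ hρ
          rw [Measure.addHaar_ball _ _ hρ, finrank_euclideanSpace_fin]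
        rw [hvol z u hu.le, hvol x ρ₂ hρ₂0.le, ← mul_assoc,
          ← ENNReal.ofReal_mul (by positivity), div_mul_cancel₀ _ hun.ne']
        refine mul_le_mul_left (ENNReal.ofReal_le_ofReal ?_) _
        refine pow_le_pow_left₀ hρ₂0.le ?_ n
        rw [hρ₂]; linarith
    have hmain2 : ENNReal.ofReal (A ^ r) * volume (ball z u) ≤
        (ENNReal.ofReal ((1 + ‖y‖) ^ n / u ^ n) * Q) * volume (ball z u) := by
      refine hmain.trans ?_
      calc volume (ball x ρ₂) * Q
          ≤ (ENNReal.ofReal ((1 + ‖y‖) ^ n / u ^ n) * volume (ball z u)) * Q :=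
            mul_le_mul_left hratio _
        _ = (ENNReal.ofReal ((1 + ‖y‖) ^ n / u ^ n) * Q) * volume (ball z u) := by ring
    have hcan : ENNReal.ofReal (A ^ r) ≤ ENNReal.ofReal ((1 + ‖y‖) ^ n / u ^ n) * Q :=
      (ENNReal.mul_le_mul_iff_left hs0 hst).mp hmain2
    have hfin : ENNReal.ofReal ((1 + ‖y‖) ^ n / u ^ n) * Q ≠ ⊤ :=
      ENNReal.mul_ne_top ENNReal.ofReal_ne_top hQt
    have h4 := ENNReal.toReal_mono hfin hcan
    rw [ENNReal.toReal_mul, ENNReal.toReal_ofReal (by positivity),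
      ENNReal.toReal_ofReal (by positivity)] at h4
    rw [← le_div_iff₀ hun]
    calc A ^ r ≤ (1 + ‖y‖) ^ n / u ^ n * q := h4
      _ = (1 + ‖y‖) ^ n * q / u ^ n := by ring
  have hAfin : A ≤ u ^ (-N) * (1 + ‖y‖) ^ N * q ^ (1/r) := by
    have hun : (0:ℝ) < u ^ n := by positivity
    have h5 : A ^ r ≤ (1 + ‖y‖) ^ n * q / u ^ n := by
      rw [le_div_iff₀ hun]; exact hAq
    have h6 : A = (A ^ r) ^ (1/r) := by
      rw [← Real.rpow_mul hA0, mul_one_div, div_self hr.ne', Real.rpow_one]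
    rw [h6]
    have h7 : (A ^ r) ^ (1/r) ≤ ((1 + ‖y‖) ^ n * q / u ^ n) ^ (1/r) :=
      Real.rpow_le_rpow (Real.rpow_nonneg hA0 r) h5 (by positivity)
    refine h7.trans (le_of_eq ?_)
    rw [Real.div_rpow (by positivity) (by positivity),
      Real.mul_rpow (by positivity) hq0]
    rw [← Real.rpow_natCast (1 + ‖y‖) n, ← Real.rpow_natCast u n,
      ← Real.rpow_mul (by positivity), ← Real.rpow_mul hu.le, mul_one_div]
    rw [hNdef, div_eq_mul_inv, ← Real.rpow_neg hu.le]
    ring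
  -- final assembly
  have hd0 : ENNReal.ofReal ((1 + 1 * ‖y‖) ^ N) ≠ 0 := by
    simp only [ne_eq, ENNReal.ofReal_eq_zero, not_le]; positivity
  rw [ENNReal.div_le_iff hd0 ENNReal.ofReal_ne_top]
  have hQr : Q ^ (1/r) = ENNReal.ofReal (q ^ (1/r)) := by
    rw [hQq, ENNReal.ofReal_rpow_of_nonneg hq0 (by positivity)]
  rw [hQr, hPp, ← ENNReal.ofReal_mul (by positivity), ← ENNReal.ofReal_mul (by positivity),
    ← ENNReal.ofReal_add (by positivity)
      (mul_nonneg (by positivity) (Finset.sum_nonneg fun i _ => hpj0 i)),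
    ← ENNReal.ofReal_mul (by positivity),
    ← enorm_eq_nnnorm, ← ofReal_norm]
  refine ENNReal.ofReal_le_ofReal ?_
  have hsum0 : 0 ≤ ∑ j, p j := Finset.sum_nonneg fun i _ => hpj0 i
  have hyN : (0:ℝ) < (1 + ‖y‖) ^ N := Real.rpow_pos_of_pos (by positivity) N
  have hqr0 : 0 ≤ q ^ (1/r) := Real.rpow_nonneg hq0 _
  have hterm1 : A ≤ C * u ^ (-N) * q ^ (1/r) * (1 + ‖y‖) ^ N := by
    refine hAfin.trans ?_
    have : u ^ (-N) * (1 + ‖y‖) ^ N * q ^ (1/r) ≤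
        C * (u ^ (-N) * (1 + ‖y‖) ^ N * q ^ (1/r)) :=
      le_mul_of_one_le_left (by positivity) hC1
    refine this.trans (le_of_eq ?_); ring
  have hterm2 : S * u ≤ C * u * (∑ j, p j) * (1 + ‖y‖) ^ N := by
    have h8 : S * u ≤ ((2:ℝ) ^ N * (1 + ‖y‖) ^ N * ∑ j, p j) * u :=
      mul_le_mul_of_nonneg_right hS hu.le
    refine h8.trans ?_
    have h9 : (2:ℝ) ^ N * ((1 + ‖y‖) ^ N * ((∑ j, p j) * u)) ≤
        C * ((1 + ‖y‖) ^ N * ((∑ j, p j) * u)) :=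
      mul_le_mul_of_nonneg_right hC2 (by positivity)
    calc ((2:ℝ) ^ N * (1 + ‖y‖) ^ N * ∑ j, p j) * u
        = (2:ℝ) ^ N * ((1 + ‖y‖) ^ N * ((∑ j, p j) * u)) := by ring
      _ ≤ C * ((1 + ‖y‖) ^ N * ((∑ j, p j) * u)) := h9
      _ = C * u * (∑ j, p j) * (1 + ‖y‖) ^ N := by ring
  calc ‖F (x - y)‖ = ‖F z‖ := by rw [hz]
    _ ≤ A + S * u := hFz
    _ ≤ C * u ^ (-N) * q ^ (1/r) * (1 + ‖y‖) ^ N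
        + C * u * (∑ j, p j) * (1 + ‖y‖) ^ N := add_le_add hterm1 hterm2
    _ = (C * u ^ (-N) * q ^ (1/r) + C * u * ∑ j, p j) * (1 + 1 * ‖y‖) ^ N := by
        rw [one_mul]; ring


end
end
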